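/- arXiv:2206.10972 — 5 statements merged into one kernel-verified Lean document; each statement's English description precedes it below -/
import Mathlib

section
/- Let {x_n} and {y_n} be sequences (with values in any set) such that {x_n} is periodic with period p ≥ 1, {y_n} is periodic with period q ≥ 1, and x_n = y_n for all 1 ≤ n ≤ p + q. Then x_n = y_n for all n ≥ 1, and the sequence {x_n} is periodic with period gcd(p, q). -/
/-!
If `x` has period `p`, `y` has period `q`, and they agree at `n`, `n + p` and `n + q`, then
`x (n+p+q) = x (n+q) = y (n+q) = y n = x n = x (n+p) = y (n+p) = y (n+p+q)`; so agreement on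
`[1, p + q]` propagates by strong induction. Then `x`, agreeing with `y`, also has period `q`, and the
periods of a sequence are closed under the steps of Euclid's algorithm, giving period `gcd p q`.
-/

/-- A sequence `x` (indexed by positive integers) has period `p` if
`x (n + p) = x n` for all `n ≥ 1`. -/
def SeqPeriod {α : Type*} (x : ℕ → α) (p : ℕ) : Prop :=
  ∀ n : ℕ, 1 ≤ n → x (n + p) = x n

namespace SeqPeriod

variable {α : Type*} {x y : ℕ → α} {p q : ℕ}

lemma add (hp : SeqPeriod x p) (hq : SeqPeriod x q) : SeqPeriod x (p + q) := fun n hn => by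
  rw [← add_assoc, hq (n + p) (by omega), hp n hn]

lemma mul (hp : SeqPeriod x p) (k : ℕ) : SeqPeriod x (p * k) := by
  induction k with
  | zero => intro n _; simp
  | succ k ih => rw [Nat.mul_succ]; exact ih.add hp

lemma sub (hp : SeqPeriod x p) (hq : SeqPeriod x q) (hpq : p ≤ q) : SeqPeriod x (q - p) :=
  fun n hn => by rw [← hp (n + (q - p)) (by omega), add_assoc, Nat.sub_add_cancel hpq, hq n hn]

lemma mod (hp : SeqPeriod x p) (hq : SeqPeriod x q) : SeqPeriod x (q % p) := by
  rw [Nat.mod_eq_sub_mul_div]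
  exact (hp.mul _).sub hq (Nat.mul_div_le q p)

lemma gcd (hp : SeqPeriod x p) (hq : SeqPeriod x q) : SeqPeriod x (Nat.gcd p q) := by
  induction p, q using Nat.gcd.induction with
  | H0 q => simpa using hq
  | H1 p q _ ih => rw [Nat.gcd_rec]; exact ih (hp.mod hq) hp

lemma eq_add_add (hx : SeqPeriod x p) (hy : SeqPeriod y q) {n : ℕ} (hn : 1 ≤ n)
    (h₀ : x n = y n) (hₚ : x (n + p) = y (n + p)) (h_q : x (n + q) = y (n + q)) :
    x (n + p + q) = y (n + p + q) := by
  calc x (n + p + q) = x (n + q) := by rw [add_right_comm, hx (n + q) (by omega)]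
    _ = y n := by rw [h_q, hy n hn]
    _ = y (n + p) := by rw [← h₀, ← hx n hn, hₚ]
    _ = y (n + p + q) := (hy (n + p) (by omega)).symm

lemma eq_of_eq_of_le_add (hp : 1 ≤ p) (hq : 1 ≤ q) (hx : SeqPeriod x p) (hy : SeqPeriod y q)
    (hxy : ∀ n, 1 ≤ n → n ≤ p + q → x n = y n) : ∀ n, 1 ≤ n → x n = y n := by
  intro n
  induction n using Nat.strong_induction_on with
  | _ n ih =>
    intro hn
    rcases le_or_gt n (p + q) with hle | hgt
    · exact hxy n hn hle
    · obtain ⟨m, rfl⟩ : ∃ m, n = m + p + q := ⟨n - p - q, by omega⟩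
      exact hx.eq_add_add hy (by omega) (ih m (by omega) (by omega))
        (ih (m + p) (by omega) (by omega)) (ih (m + q) (by omega) (by omega))

end SeqPeriod

theorem stmt0 {α : Type*} (x y : ℕ → α) (p q : ℕ)
    (hp : 1 ≤ p) (hq : 1 ≤ q)
    (hxp : SeqPeriod x p) (hyq : SeqPeriod y q)
    (hxy : ∀ n : ℕ, 1 ≤ n → n ≤ p + q → x n = y n) :
    (∀ n : ℕ, 1 ≤ n → x n = y n) ∧ SeqPeriod x (Nat.gcd p q) := by
  have heq := SeqPeriod.eq_of_eq_of_le_add hp hq hxp hyq hxy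
  have hxq : SeqPeriod x q := fun n hn => by
    rw [heq (n + q) (by omega), hyq n hn, heq n hn]
  exact ⟨heq, hxp.gcd hxq⟩
end

section
/- Let w₁ and w₂ be primitive words over an alphabet, of lengths p and q respectively. If there exist powers w₁^{m₁} and w₂^{m₂} such that w₁² is a prefix of w₂^{m₂} and w₂² is a prefix of w₁^{m₁}, then p = q and w₁ = w₂. -/
/-- The `n`-th power of a word (concatenation of `n` copies). -/
def wpow {α : Type*} (w : List α) (n : ℕ) : List α := (List.replicate n w).flatten

/-- A word is primitive if it is nonempty and not a nontrivial power of
another word. -/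
def PrimitiveWord {α : Type*} (w : List α) : Prop :=
  w ≠ [] ∧ ∀ (u : List α) (n : ℕ), w = wpow u n → n = 1

lemma wpow_zero {α : Type*} (w : List α) : wpow w 0 = [] := rfl

lemma wpow_one {α : Type*} (w : List α) : wpow w 1 = w := by
  simp [wpow]

lemma wpow_succ {α : Type*} (w : List α) (n : ℕ) :
    wpow w (n + 1) = w ++ wpow w n := by
  simp [wpow, List.replicate_succ]

lemma wpow_add {α : Type*} (w : List α) (m n : ℕ) :
    wpow w (m + n) = wpow w m ++ wpow w n := by
  induction m with
  | zero => simp [wpow_zero]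
  | succ m ih =>
    rw [Nat.succ_add, wpow_succ, wpow_succ, ih, List.append_assoc]

lemma length_wpow {α : Type*} (w : List α) (n : ℕ) :
    (wpow w n).length = n * w.length := by
  simp [wpow]

/-- Auxiliary: commuting words with a length bound have a common root. -/
lemma comm_aux {α : Type*} : ∀ (N : ℕ) (x y : List α),
    x.length + y.length ≤ N → x.length ≤ y.length → x ++ y = y ++ x →
    ∃ (z : List α) (k l : ℕ), x = wpow z k ∧ y = wpow z l := by
  intro N
  induction N with
  | zero =>
    intro x y hN _ _
    have hx : x = [] := by
      have := List.length_eq_zero_iff.mp (by omega : x.length = 0)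
      exact this
    have hy : y = [] := List.length_eq_zero_iff.mp (by omega)
    exact ⟨[], 0, 0, by simp [hx, wpow_zero], by simp [hy, wpow_zero]⟩
  | succ N ih =>
    intro x y hN hle hcomm
    rcases eq_or_ne x [] with rfl | hx
    · exact ⟨y, 0, 1, by simp [wpow_zero], by simp [wpow_one]⟩
    · -- x is a prefix of y
      have hxy : x <+: y :=
        List.prefix_of_prefix_length_le (hcomm ▸ List.prefix_append x y)
          (List.prefix_append y x) hle
      obtain ⟨t, rfl⟩ := hxy
      have hxt : x ++ t = t ++ x := by
        have : x ++ (x ++ t) = x ++ (t ++ x) := by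
          have := hcomm
          simpa [List.append_assoc] using this
        exact List.append_cancel_left this
      have hxlen : 1 ≤ x.length := by
        rcases x with _ | ⟨a, x⟩
        · exact absurd rfl hx
        · simp
      have hbound : x.length + t.length ≤ N := by
        have := hN
        simp [List.length_append] at this
        omega
      rcases Nat.le_total x.length t.length with h | h
      · obtain ⟨z, k, l, hxz, htz⟩ := ih x t hbound h hxt
        exact ⟨z, k, k + l, hxz, by rw [wpow_add, hxz, htz]⟩
      · obtain ⟨z, k, l, htz, hxz⟩ := ih t x (by omega) h hxt.symm
        exact ⟨z, l, l + k, hxz, by rw [wpow_add, hxz, htz]⟩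

lemma comm_pow {α : Type*} (x y : List α) (h : x ++ y = y ++ x) :
    ∃ (z : List α) (k l : ℕ), x = wpow z k ∧ y = wpow z l := by
  rcases Nat.le_total x.length y.length with hle | hle
  · exact comm_aux (x.length + y.length) x y le_rfl hle h
  · obtain ⟨z, k, l, hy, hx⟩ :=
      comm_aux (y.length + x.length) y x le_rfl hle h.symm
    exact ⟨z, l, k, hx, hy⟩

/-- Key step: under the hypotheses, if `w₁` is no longer than `w₂`, the two
words commute. -/
lemma key_comm {α : Type*} (w₁ w₂ : List α) (h1 : w₁ ≠ [])
    (hle : w₁.length ≤ w₂.length)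
    (hpre₁ : ∃ m₂ : ℕ, (w₁ ++ w₁) <+: wpow w₂ m₂)
    (hpre₂ : ∃ m₁ : ℕ, (w₂ ++ w₂) <+: wpow w₁ m₁) :
    w₁ ++ w₂ = w₂ ++ w₁ := by
  obtain ⟨m₂, hA⟩ := hpre₁
  obtain ⟨m₁, hB⟩ := hpre₂
  have hw1 : w₁ <+: wpow w₂ m₂ := (List.prefix_append w₁ w₁).trans hA
  -- m₂ ≥ 1
  have hm₂ : 1 ≤ m₂ := by
    by_contra hm
    have : m₂ = 0 := by omega
    subst this
    rw [wpow_zero] at hw1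
    exact h1 (List.eq_nil_of_prefix_nil hw1)
  have hsplit : wpow w₂ m₂ = w₂ ++ wpow w₂ (m₂ - 1) := by
    rw [← wpow_succ]; congr 1; omega
  rw [hsplit] at hw1
  have hw12 : w₁ <+: w₂ :=
    List.prefix_of_prefix_length_le hw1 (List.prefix_append _ _) hle
  -- w₂ is a prefix of wpow w₁ m₁
  have hw2 : w₂ <+: wpow w₁ m₁ := (List.prefix_append w₂ w₂).trans hB
  have hP1 : w₁ ++ w₂ <+: wpow w₁ (m₁ + 1) := by
    rw [wpow_succ]
    exact (List.prefix_append_right_inj w₁).mpr hw2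
  have hP2 : w₂ ++ w₁ <+: wpow w₁ (m₁ + 1) := by
    have h21 : w₂ ++ w₁ <+: w₂ ++ w₂ := (List.prefix_append_right_inj w₂).mpr hw12
    have : w₂ ++ w₁ <+: wpow w₁ m₁ := h21.trans hB
    have hstep : wpow w₁ m₁ <+: wpow w₁ (m₁ + 1) := by
      have : wpow w₁ (m₁ + 1) = wpow w₁ m₁ ++ w₁ := by
        rw [(by omega : m₁ + 1 = m₁ + 1), wpow_add, wpow_one]
      rw [this]
      exact List.prefix_append _ _
    exact this.trans hstep
  have hlen : (w₁ ++ w₂).length = (w₂ ++ w₁).length := by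
    simp [List.length_append, Nat.add_comm]
  exact (List.prefix_of_prefix_length_le hP1 hP2 (le_of_eq hlen)).eq_of_length hlen

theorem stmt1 {α : Type*} (w₁ w₂ : List α)
    (h₁ : PrimitiveWord w₁) (h₂ : PrimitiveWord w₂)
    (hpre₁ : ∃ m₂ : ℕ, (w₁ ++ w₁) <+: wpow w₂ m₂)
    (hpre₂ : ∃ m₁ : ℕ, (w₂ ++ w₂) <+: wpow w₁ m₁) :
    w₁.length = w₂.length ∧ w₁ = w₂ := by
  have hcomm : w₁ ++ w₂ = w₂ ++ w₁ := by
    rcases Nat.le_total w₁.length w₂.length with hle | hle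
    · exact key_comm w₁ w₂ h₁.1 hle hpre₁ hpre₂
    · exact (key_comm w₂ w₁ h₂.1 hle hpre₂ hpre₁).symm
  obtain ⟨z, k, l, hx, hy⟩ := comm_pow w₁ w₂ hcomm
  have hk : k = 1 := h₁.2 z k hx
  have hl : l = 1 := h₂.2 z l hy
  subst hk hl
  rw [wpow_one] at hx hy
  exact ⟨by rw [hx, hy], by rw [hx, hy]⟩
end

section
/- Let w be a word over an alphabet with two decompositions w = a₁·w₁^{m₁}·b₁ = a₂·w₂^{m₂}·b₂, where m₁, m₂ ≥ 2, w₁ and w₂ are primitive, and there exist constants A, B ≥ 0 with |aᵢ| ≤ A, |bᵢ| ≤ B, |w| − (A+B) ≥ 2|wᵢ| for i = 1, 2. Then, regarding all words as elements of the free group on the alphabet, a₁w₁a₁⁻¹ = a₂w₂a₂⁻¹ and b₁⁻¹w₁b₁ = b₂⁻¹w₂b₂. -/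
/-- The canonical image in the free group on `X` of a word on the alphabet
`X^{±1}` (a letter is a pair `(x, b)`, `b = true` meaning the positive
letter `x`). -/
def evalFree {X : Type*} (w : List (X × Bool)) : FreeGroup X :=
  (w.map (fun l => if l.2 then FreeGroup.of l.1 else (FreeGroup.of l.1)⁻¹)).prod

namespace Aux

variable {α : Type*} {β : Type*} {X : Type*}

lemma wpow_zero (u : List α) : wpow u 0 = [] := rfl

lemma wpow_succ (u : List α) (n : ℕ) : wpow u (n+1) = u ++ wpow u n := by
  rw [wpow, wpow, List.replicate_succ]; rfl

lemma length_wpow (u : List α) (n : ℕ) : (wpow u n).length = n * u.length := by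
  induction n with
  | zero => simp [wpow_zero]
  | succ n ih => rw [wpow_succ, List.length_append, ih]; ring

lemma wpow_getD (u : List α) (d : α) : ∀ (m j : ℕ), j < m * u.length →
    (wpow u m).getD j d = u.getD (j % u.length) d := by
  intro m
  induction m with
  | zero => intro j h; omega
  | succ m ih =>
    intro j h
    rw [Nat.succ_mul] at h
    rw [wpow_succ]
    by_cases hj : j < u.length
    · rw [List.getD_append _ _ _ _ hj, Nat.mod_eq_of_lt hj]
    · push_neg at hj
      rw [List.getD_append_right _ _ _ _ hj, ih (j - u.length) (by omega),
        Nat.mod_eq_sub_mod hj]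

lemma period_pow (d : α) (g : ℕ) (hg : 0 < g) : ∀ (k : ℕ) (z : List α),
    z.length = k * g → (∀ i, i + g < z.length → z.getD i d = z.getD (i+g) d) →
    z = wpow (z.take g) k := by
  intro k
  induction k with
  | zero => intro z hz _; rw [wpow_zero]; exact List.eq_nil_of_length_eq_zero (by omega)
  | succ k ih =>
    intro z hz hper
    have hz' : z.length = k * g + g := by rw [hz]; ring
    rcases Nat.eq_zero_or_pos k with rfl | hk
    · rw [wpow_succ, wpow_zero, List.append_nil, List.take_of_length_le (by omega)]
    · have hkg : g ≤ k * g := Nat.le_mul_of_pos_left g hk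
      have hdrop : z.drop g = wpow ((z.drop g).take g) k := by
        apply ih
        · rw [List.length_drop]; omega
        · intro i hi
          rw [List.length_drop] at hi
          have e1 : (z.drop g).getD i d = z.getD (g+i) d := by
            rw [List.getD_eq_getElem _ _ (by rw [List.length_drop]; omega),
              List.getD_eq_getElem _ _ (by omega), List.getElem_drop]
          have e2 : (z.drop g).getD (i+g) d = z.getD (g+i+g) d := by
            rw [List.getD_eq_getElem _ _ (by rw [List.length_drop]; omega),
              List.getD_eq_getElem _ _ (by omega), List.getElem_drop]
            congr 1; omega
          rw [e1, e2]
          exact hper (g+i) (by omega)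
      have htake : (z.drop g).take g = z.take g := by
        apply List.ext_getElem
        · rw [List.length_take, List.length_take, List.length_drop]; omega
        · intro i h1 h2
          have hig : i < g := by
            have : ((z.drop g).take g).length = min g (z.drop g).length := List.length_take; omega
          simp only [List.getElem_take, List.getElem_drop]
          have := hper i (by omega)
          rw [List.getD_eq_getElem _ _ (by omega), List.getD_eq_getElem _ _ (by omega)] at this
          simp only [show g + i = i + g from by omega]; exact this.symm
      conv_lhs => rw [← List.take_append_drop g z]
      rw [hdrop, htake, ← wpow_succ]

lemma chain (z : ℕ → β) (p n : ℕ) (h1 : ∀ i, i + p < n → z i = z (i+p)) :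
    ∀ k i, i + k * p < n → z i = z (i + k * p) := by
  intro k
  induction k with
  | zero => intro i _; simp
  | succ k ih =>
    intro i hi
    have hk : (k+1) * p = p + k * p := by ring
    rw [hk] at hi ⊢
    have e1 : z i = z (i + p) := h1 i (by omega)
    have e2 : z (i + p) = z (i + p + k * p) := ih (i+p) (by omega)
    rw [e1, e2]; congr 1; omega

lemma finewilf : ∀ (q p : ℕ), 0 < p → p ≤ q → ∀ (n : ℕ) (z : ℕ → β),
    p + q - Nat.gcd p q ≤ n →
    (∀ i, i + p < n → z i = z (i+p)) →
    (∀ i, i + q < n → z i = z (i+q)) →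
    ∀ i j, i < n → j < n → i % Nat.gcd p q = j % Nat.gcd p q → z i = z j := by
  intro q
  induction q using Nat.strong_induction_on with
  | _ q IH =>
    intro p hp hpq n z hn h1 h2 i j hi hj hij
    rcases eq_or_lt_of_le hpq with rfl | hlt
    · -- p = q
      rw [Nat.gcd_self] at hij
      clear hn h2
      have main : ∀ i j, i ≤ j → i < n → j < n → i % p = j % p → z i = z j := by
        intro i j hle hi hj hij
        have hdvd : p ∣ j - i := (Nat.modEq_iff_dvd' hle).mp hij
        obtain ⟨k, hk⟩ := hdvd
        have hj' : j = i + k * p := by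
          have : p * k = k * p := by ring
          omega
        rw [hj']
        exact chain z p n h1 k i (by omega)
      rcases le_total i j with h | h
      · exact main i j h hi hj hij
      · exact (main j i h hj hi hij.symm).symm
    · -- p < q
      set g := Nat.gcd p q with hg
      have hgp : g ∣ p := Nat.gcd_dvd_left p q
      have hgq : g ∣ q := Nat.gcd_dvd_right p q
      have hg0 : 0 < g := Nat.gcd_pos_of_pos_left q hp
      set q' := q - p with hq'def
      have hq'0 : 0 < q' := by omega
      have hgcd' : Nat.gcd p q' = g := by
        rw [hq'def, Nat.gcd_sub_self_right (le_of_lt hlt)]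
      have hgq' : g ∣ q' := hgcd' ▸ Nat.gcd_dvd_right p q'
      have hgleq' : g ≤ q' := Nat.le_of_dvd hq'0 hgq'
      have hglep : g ≤ p := Nat.le_of_dvd hp hgp
      have h1' : ∀ i, i + p < n - p → z i = z (i+p) := fun i h => h1 i (by omega)
      have h2' : ∀ i, i + q' < n - p → z i = z (i+q') := by
        intro i h
        have e1 := h2 i (by omega)
        have e2 := h1 (i + q') (by omega)
        rw [show i + q' + p = i + q from by omega] at e2
        exact e1.trans e2.symm
      have key : ∀ i j, i < n - p → j < n - p → i % g = j % g → z i = z j := by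
        rcases le_total p q' with hord | hord
        · have := IH q' (by omega) p hp hord (n - p) z
            (by rw [hgcd']; omega) h1' h2'
          rw [hgcd'] at this; exact this
        · have := IH p hlt q' hq'0 hord (n - p) z
            (by rw [Nat.gcd_comm, hgcd']; omega) h2' h1'
          rw [Nat.gcd_comm, hgcd'] at this; exact this
      -- reduce indices below n - p
      obtain ⟨t, ht⟩ := hgp
      have reduce : ∀ i, i < n → ∃ i', i' < n - p ∧ i' % g = i % g ∧ z i' = z i := by
        intro i hi
        by_cases h : i < n - p
        · exact ⟨i, h, rfl, rfl⟩
        · push_neg at h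
          have hip : p ≤ i := by omega
          refine ⟨i - p, by omega, ?_, ?_⟩
          · rw [ht]
            conv_rhs => rw [show i = (i - g * t) + g * t from by omega]
            rw [Nat.add_mul_mod_self_left]
          · have := h1 (i - p) (by omega)
            rw [show i - p + p = i from by omega] at this
            exact this
      obtain ⟨i', hi1, hi2, hi3⟩ := reduce i hi
      obtain ⟨j', hj1, hj2, hj3⟩ := reduce j hj
      rw [← hi3, ← hj3]
      exact key i' j' hi1 hj1 (by omega)

lemma take_wpow (u : List α) : ∀ (k m r : ℕ), k + 1 ≤ m → r ≤ u.length →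
    (wpow u m).take (k * u.length + r) = wpow u k ++ u.take r := by
  intro k
  induction k with
  | zero =>
    intro m r hm hr
    obtain ⟨m', rfl⟩ : ∃ m', m = m' + 1 := ⟨m - 1, by omega⟩
    rw [wpow_succ, wpow_zero]
    simp only [Nat.zero_mul, Nat.zero_add, List.nil_append]
    exact List.take_append_of_le_length hr
  | succ k ih =>
    intro m r hm hr
    obtain ⟨m', rfl⟩ : ∃ m', m = m' + 1 := ⟨m - 1, by omega⟩
    rw [wpow_succ u m', show (k+1) * u.length + r = u.length + (k * u.length + r) from by ring]
    rw [List.take_length_add_append, ih m' r (by omega) hr, wpow_succ, List.append_assoc]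

lemma drop_wpow (u : List α) : ∀ (k m : ℕ), k ≤ m →
    (wpow u m).drop (k * u.length) = wpow u (m - k) := by
  intro k
  induction k with
  | zero => intro m _; simp
  | succ k ih =>
    intro m hm
    obtain ⟨m', rfl⟩ : ∃ m', m = m' + 1 := ⟨m - 1, by omega⟩
    rw [wpow_succ u m', show (k+1) * u.length = u.length + k * u.length from by ring,
      List.drop_length_add_append, ih m' (by omega)]
    congr 1
    omega

lemma evalFree_append (x y : List (X × Bool)) :
    evalFree (x ++ y) = evalFree x * evalFree y := by
  simp [evalFree]

lemma evalFree_wpow (u : List (X × Bool)) (n : ℕ) :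
    evalFree (wpow u n) = (evalFree u)^n := by
  induction n with
  | zero => simp [wpow_zero, evalFree]
  | succ n ih => rw [wpow_succ, evalFree_append, ih, pow_succ']

lemma conj_pow' {G : Type*} [Group G] (t u : G) (n : ℕ) :
    (t⁻¹ * u * t)^n = t⁻¹ * u^n * t := by
  induction n with
  | zero => simp
  | succ n ih => rw [pow_succ, pow_succ, ih]; group

lemma key {X : Type*} (w a₁ b₁ a₂ b₂ w₁ w₂ : List (X × Bool))
    (m₁ m₂ : ℕ) (A B : ℝ)
    (hm₁ : 2 ≤ m₁) (hm₂ : 2 ≤ m₂)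
    (hdec₁ : w = a₁ ++ wpow w₁ m₁ ++ b₁)
    (hdec₂ : w = a₂ ++ wpow w₂ m₂ ++ b₂)
    (hp₁ : PrimitiveWord w₁) (hp₂ : PrimitiveWord w₂)
    (ha₁ : (a₁.length : ℝ) ≤ A) (ha₂ : (a₂.length : ℝ) ≤ A)
    (hb₁ : (b₁.length : ℝ) ≤ B) (hb₂ : (b₂.length : ℝ) ≤ B)
    (hl₁ : (w.length : ℝ) - (A + B) ≥ 2 * w₁.length)
    (hl₂ : (w.length : ℝ) - (A + B) ≥ 2 * w₂.length)
    (hle : a₁.length ≤ a₂.length) :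
    evalFree a₁ * evalFree w₁ * (evalFree a₁)⁻¹ =
      evalFree a₂ * evalFree w₂ * (evalFree a₂)⁻¹ ∧
    (evalFree b₁)⁻¹ * evalFree w₁ * evalFree b₁ =
      (evalFree b₂)⁻¹ * evalFree w₂ * evalFree b₂ := by
  have hp0 : 0 < w₁.length := List.length_pos_iff.mpr hp₁.1
  have hq0 : 0 < w₂.length := List.length_pos_iff.mpr hp₂.1
  have hwlen₁ : w.length = a₁.length + m₁ * w₁.length + b₁.length := by
    rw [hdec₁, List.length_append, List.length_append, length_wpow]
  have hwlen₂ : w.length = a₂.length + m₂ * w₂.length + b₂.length := by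
    rw [hdec₂, List.length_append, List.length_append, length_wpow]
  have hwr₁ : (w.length : ℝ) = a₁.length + m₁ * w₁.length + b₁.length := by
    rw [hwlen₁]; push_cast; ring
  have hwr₂ : (w.length : ℝ) = a₂.length + m₂ * w₂.length + b₂.length := by
    rw [hwlen₂]; push_cast; ring
  have hcast : ∀ x y : ℕ, (x : ℝ) ≤ (y : ℝ) → x ≤ y := fun x y h => by exact_mod_cast h
  have hkey1 : a₂.length + 2*w₁.length ≤ a₁.length + m₁ * w₁.length := by
    apply hcast; push_cast; linarith
  have hkey2 : a₂.length + 2*w₁.length ≤ a₂.length + m₂ * w₂.length := by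
    apply hcast; push_cast; linarith
  have hkey3 : a₂.length + 2*w₂.length ≤ a₁.length + m₁ * w₁.length := by
    apply hcast; push_cast; linarith
  have hkey4 : a₂.length + 2*w₂.length ≤ a₂.length + m₂ * w₂.length := by
    have : 2*w₂.length ≤ m₂ * w₂.length := Nat.mul_le_mul_right w₂.length hm₂
    omega
  obtain ⟨d, hd⟩ : ∃ x, x ∈ w₁ := List.length_pos_iff_exists_mem.mp hp0
  set f : ℕ → X × Bool := fun i => w.getD i d with hf
  have mid₁ : ∀ i, a₁.length ≤ i → i < a₁.length + m₁ * w₁.length →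
      f i = w₁.getD ((i - a₁.length) % w₁.length) d := by
    intro i h1 h2
    show w.getD i d = _
    rw [hdec₁, List.append_assoc, List.getD_append_right _ _ _ _ h1,
      List.getD_append _ _ _ _ (by rw [length_wpow]; omega)]
    exact wpow_getD w₁ d m₁ _ (by omega)
  have mid₂ : ∀ i, a₂.length ≤ i → i < a₂.length + m₂ * w₂.length →
      f i = w₂.getD ((i - a₂.length) % w₂.length) d := by
    intro i h1 h2
    show w.getD i d = _
    rw [hdec₂, List.append_assoc, List.getD_append_right _ _ _ _ h1,
      List.getD_append _ _ _ _ (by rw [length_wpow]; omega)]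
    exact wpow_getD w₂ d m₂ _ (by omega)
  obtain ⟨e, he1, he2, hs2p, hs2q⟩ : ∃ e, e ≤ a₁.length + m₁ * w₁.length ∧
      e ≤ a₂.length + m₂ * w₂.length ∧ a₂.length + 2*w₁.length ≤ e ∧
      a₂.length + 2*w₂.length ≤ e :=
    ⟨min (a₁.length + m₁ * w₁.length) (a₂.length + m₂ * w₂.length),
      min_le_left _ _, min_le_right _ _, by omega, by omega⟩
  obtain ⟨n, hn⟩ : ∃ n, n = e - a₂.length := ⟨_, rfl⟩
  set z : ℕ → X × Bool := fun j => f (a₂.length + j) with hz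
  have hz1 : ∀ i, i + w₁.length < n → z i = z (i + w₁.length) := by
    intro i hi
    show f (a₂.length + i) = f (a₂.length + (i + w₁.length))
    rw [mid₁ (a₂.length+i) (by omega) (by omega),
      mid₁ (a₂.length+(i+w₁.length)) (by omega) (by omega)]
    congr 1
    rw [show a₂.length + (i+w₁.length) - a₁.length
        = (a₂.length + i - a₁.length) + w₁.length from by omega,
      Nat.add_mod_right]
  have hz2 : ∀ i, i + w₂.length < n → z i = z (i + w₂.length) := by
    intro i hi
    show f (a₂.length + i) = f (a₂.length + (i + w₂.length))
    rw [mid₂ (a₂.length+i) (by omega) (by omega),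
      mid₂ (a₂.length+(i+w₂.length)) (by omega) (by omega)]
    congr 1
    rw [show a₂.length + (i+w₂.length) - a₂.length
        = (a₂.length + i - a₂.length) + w₂.length from by omega,
      Nat.add_mod_right]
  obtain ⟨g, hgdef⟩ : ∃ g, g = Nat.gcd w₁.length w₂.length := ⟨_, rfl⟩
  have hgp : g ∣ w₁.length := hgdef ▸ Nat.gcd_dvd_left _ _
  have hgq : g ∣ w₂.length := hgdef ▸ Nat.gcd_dvd_right _ _
  have hg0 : 0 < g := hgdef ▸ Nat.gcd_pos_of_pos_left _ hp0
  have hglep : g ≤ w₁.length := Nat.le_of_dvd hp0 hgp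
  have hgleq : g ≤ w₂.length := Nat.le_of_dvd hq0 hgq
  have hfw : ∀ i j, i < n → j < n → i % g = j % g → z i = z j := by
    rw [hgdef]
    rcases le_total w₁.length w₂.length with h | h
    · exact finewilf w₂.length w₁.length hp0 h n z (by rw [← hgdef]; omega) hz1 hz2
    · have h' := finewilf w₁.length w₂.length hq0 h n z
        (by rw [Nat.gcd_comm, ← hgdef]; omega) hz2 hz1
      rw [Nat.gcd_comm w₂.length w₁.length] at h'
      exact h'
  obtain ⟨k, r, hskr, hr⟩ : ∃ k r, a₂.length = a₁.length + k * w₁.length + r ∧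
      r < w₁.length := by
    refine ⟨(a₂.length - a₁.length) / w₁.length,
      (a₂.length - a₁.length) % w₁.length, ?_, Nat.mod_lt _ hp0⟩
    have h1 := Nat.div_add_mod (a₂.length - a₁.length) w₁.length
    have h2 := Nat.mul_comm w₁.length ((a₂.length - a₁.length) / w₁.length)
    omega
  -- w₁.length = g
  have hw₁per : ∀ i, i + g < w₁.length → w₁.getD i d = w₁.getD (i+g) d := by
    intro i hig
    have hmul : (k+1) * w₁.length = k * w₁.length + w₁.length := by ring
    have hPi : ∀ t, t < w₁.length →
        f (a₁.length + (k+1) * w₁.length + t) = w₁.getD t d := by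
      intro t ht
      rw [mid₁ (a₁.length + (k+1) * w₁.length + t) (by omega) (by omega)]
      congr 1
      rw [show a₁.length + (k+1) * w₁.length + t - a₁.length
          = w₁.length * (k+1) + t from by rw [Nat.mul_comm]; omega,
        Nat.mul_add_mod, Nat.mod_eq_of_lt ht]
    have hz_eq := hfw (a₁.length + (k+1) * w₁.length + i - a₂.length)
      (a₁.length + (k+1) * w₁.length + i + g - a₂.length) (by omega) (by omega)
      (by rw [show a₁.length + (k+1) * w₁.length + i + g - a₂.length
          = (a₁.length + (k+1) * w₁.length + i - a₂.length) + g from by omega,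
        Nat.add_mod_right])
    calc w₁.getD i d = f (a₁.length + (k+1) * w₁.length + i) := (hPi i (by omega)).symm
      _ = z (a₁.length + (k+1) * w₁.length + i - a₂.length) := by
          show _ = f (a₂.length + _); congr 1; omega
      _ = z (a₁.length + (k+1) * w₁.length + i + g - a₂.length) := hz_eq
      _ = f (a₁.length + (k+1) * w₁.length + (i + g)) := by
          show f (a₂.length + _) = _; congr 1; omega
      _ = w₁.getD (i+g) d := hPi (i+g) (by omega)
  have hpg : w₁.length = g := by
    have hdiv := Nat.div_mul_cancel hgp
    have h1 := hp₁.2 _ _ (period_pow d g hg0 (w₁.length / g) w₁ (by omega) hw₁per)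
    rw [h1, one_mul] at hdiv
    omega
  -- w₂.length = g
  have hw₂per : ∀ i, i + g < w₂.length → w₂.getD i d = w₂.getD (i+g) d := by
    intro i hig
    have hQi : ∀ t, t < w₂.length → z t = w₂.getD t d := by
      intro t ht
      show f (a₂.length + t) = _
      rw [mid₂ (a₂.length+t) (by omega) (by omega)]
      congr 1
      rw [show a₂.length + t - a₂.length = t from by omega, Nat.mod_eq_of_lt ht]
    have hz_eq := hfw i (i + g) (by omega) (by omega) (by rw [Nat.add_mod_right])
    rw [← hQi i (by omega), ← hQi (i+g) (by omega)]
    exact hz_eq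
  have hqg : w₂.length = g := by
    have hdiv := Nat.div_mul_cancel hgq
    have h1 := hp₂.2 _ _ (period_pow d g hg0 (w₂.length / g) w₂ (by omega) hw₂per)
    rw [h1, one_mul] at hdiv
    omega
  have hpq : w₁.length = w₂.length := by omega
  have hk2 : k + 2 ≤ m₁ := by
    have h' : (k+2) * w₁.length ≤ m₁ * w₁.length := by
      have : (k+2) * w₁.length = k * w₁.length + 2 * w₁.length := by ring
      omega
    exact Nat.le_of_mul_le_mul_right h' hp0
  -- list identities
  have ha2eq : a₂ = a₁ ++ wpow w₁ k ++ w₁.take r := by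
    have h1 : a₂ = w.take a₂.length := by
      rw [hdec₂, List.append_assoc, List.take_left]
    rw [h1, hdec₁, List.append_assoc,
      show a₂.length = a₁.length + (k * w₁.length + r) from by omega,
      List.take_length_add_append,
      List.take_append_of_le_length (by rw [length_wpow]; omega),
      take_wpow w₁ k m₁ r (by omega) (le_of_lt hr), List.append_assoc]
  have hw2eq : w₂ = w₁.drop r ++ w₁.take r := by
    have h1 : (w.drop a₂.length).take w₂.length = w₂ := by
      rw [hdec₂, List.append_assoc, List.drop_left,
        List.take_append_of_le_length (by rw [length_wpow]; omega)]
      obtain ⟨m', hm'⟩ : ∃ m', m₂ = m' + 1 := ⟨m₂ - 1, by omega⟩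
      rw [hm', wpow_succ]
      exact List.take_left
    rw [← h1, hdec₁, List.append_assoc,
      show a₂.length = a₁.length + (k * w₁.length + r) from by omega,
      List.drop_length_add_append,
      List.drop_append_of_le_length (by rw [length_wpow]; omega),
      List.take_append_of_le_length (by rw [List.length_drop, length_wpow]; omega),
      ← List.drop_drop,
      drop_wpow w₁ k m₁ (by omega)]
    obtain ⟨m', hm'⟩ : ∃ m', m₁ - k = m' + 2 := ⟨m₁ - k - 2, by omega⟩
    rw [hm', wpow_succ, List.drop_append_of_le_length (le_of_lt hr),
      show w₂.length = (w₁.drop r).length + r from by rw [List.length_drop]; omega,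
      List.take_length_add_append, wpow_succ, List.take_append_of_le_length (le_of_lt hr)]
  -- free group algebra
  have hsplit : evalFree (w₁.take r) * evalFree (w₁.drop r) = evalFree w₁ := by
    rw [← evalFree_append, List.take_append_drop]
  have hw2' : evalFree w₂ =
      (evalFree (w₁.take r))⁻¹ * evalFree w₁ * evalFree (w₁.take r) := by
    rw [hw2eq, evalFree_append, ← hsplit]; group
  constructor
  · rw [ha2eq, hw2', evalFree_append, evalFree_append, evalFree_wpow]
    group
  · have hE := congrArg evalFree (hdec₁.symm.trans hdec₂)
    simp only [evalFree_append, evalFree_wpow] at hE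
    rw [ha2eq, hw2'] at hE
    simp only [evalFree_append, evalFree_wpow, conj_pow'] at hE
    have hB2 : evalFree b₂ =
        (evalFree a₁ * (evalFree w₁)^k * evalFree (w₁.take r) *
          ((evalFree (w₁.take r))⁻¹ * (evalFree w₁)^m₂ * evalFree (w₁.take r)))⁻¹ *
          (evalFree a₁ * (evalFree w₁)^m₁ * evalFree b₁) := by
      rw [hE]; group
    rw [hw2', hB2]
    group

end Aux

theorem stmt3 {X : Type*} (w a₁ b₁ a₂ b₂ w₁ w₂ : List (X × Bool))
    (m₁ m₂ : ℕ) (A B : ℝ)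
    (hm₁ : 2 ≤ m₁) (hm₂ : 2 ≤ m₂)
    (hdec₁ : w = a₁ ++ wpow w₁ m₁ ++ b₁)
    (hdec₂ : w = a₂ ++ wpow w₂ m₂ ++ b₂)
    (hp₁ : PrimitiveWord w₁) (hp₂ : PrimitiveWord w₂)
    (hA : 0 ≤ A) (hB : 0 ≤ B)
    (ha₁ : (a₁.length : ℝ) ≤ A) (ha₂ : (a₂.length : ℝ) ≤ A)
    (hb₁ : (b₁.length : ℝ) ≤ B) (hb₂ : (b₂.length : ℝ) ≤ B)
    (hl₁ : (w.length : ℝ) - (A + B) ≥ 2 * w₁.length)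
    (hl₂ : (w.length : ℝ) - (A + B) ≥ 2 * w₂.length) :
    evalFree a₁ * evalFree w₁ * (evalFree a₁)⁻¹ =
      evalFree a₂ * evalFree w₂ * (evalFree a₂)⁻¹ ∧
    (evalFree b₁)⁻¹ * evalFree w₁ * evalFree b₁ =
      (evalFree b₂)⁻¹ * evalFree w₂ * evalFree b₂ := by
  rcases le_total a₁.length a₂.length with h | h
  · exact Aux.key w a₁ b₁ a₂ b₂ w₁ w₂ m₁ m₂ A B hm₁ hm₂ hdec₁ hdec₂ hp₁ hp₂
      ha₁ ha₂ hb₁ hb₂ hl₁ hl₂ h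
  · obtain ⟨h1, h2⟩ := Aux.key w a₂ b₂ a₁ b₁ w₂ w₁ m₂ m₁ A B hm₂ hm₁ hdec₂ hdec₁
      hp₂ hp₁ ha₂ ha₁ hb₂ hb₁ hl₂ hl₁ h
    exact ⟨h1.symm, h2.symm⟩
end

section
/- In a right-angled Artin group G(Γ), an element g is cyclically reduced (i.e., has minimal word length in its conjugacy class) if and only if there is no geodesic decomposition g = u⁻¹hu with u ≠ 1. -/
/-- The commutation relators of the right-angled Artin group `G(Γ)`:
generators `v, w` commute whenever `{v, w}` is NOT an edge of `Γ`
(the convention of the paper). -/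
def raagRels {V : Type} (Γ : SimpleGraph V) : Set (FreeGroup V) :=
  {r | ∃ v w : V, v ≠ w ∧ ¬ Γ.Adj v w ∧
    r = FreeGroup.of v * FreeGroup.of w * (FreeGroup.of v)⁻¹ * (FreeGroup.of w)⁻¹}

/-- The right-angled Artin group `G(Γ)` (paper's convention). -/
abbrev RAAG {V : Type} (Γ : SimpleGraph V) := PresentedGroup (raagRels Γ)

/-- The generator of `G(Γ)` corresponding to a vertex. -/
def raagGen {V : Type} (Γ : SimpleGraph V) (v : V) : RAAG Γ := PresentedGroup.of v

/-- The group element corresponding to a letter `v` or `v⁻¹`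
(a letter is a pair `(v, b)`, `b = true` meaning the positive letter `v`). -/
def raagLetter {V : Type} (Γ : SimpleGraph V) (l : V × Bool) : RAAG Γ :=
  if l.2 then raagGen Γ l.1 else (raagGen Γ l.1)⁻¹

/-- The element of `G(Γ)` represented by a word on `V(Γ)^{±1}`. -/
def evalWord {V : Type} (Γ : SimpleGraph V) (w : List (V × Bool)) : RAAG Γ :=
  (w.map (raagLetter Γ)).prod

/-- The word length `|g|` of an element of `G(Γ)`. -/
noncomputable def wlen {V : Type} (Γ : SimpleGraph V) (g : RAAG Γ) : ℕ :=
  sInf {n | ∃ w : List (V × Bool), evalWord Γ w = g ∧ w.length = n}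

/-- A word is reduced if no shorter word represents the same element. -/
def IsReducedWord {V : Type} (Γ : SimpleGraph V) (w : List (V × Bool)) : Prop :=
  w.length = wlen Γ (evalWord Γ w)

/-- The support of `g`: the set of generators appearing in some reduced word
representing `g` (this set is known to be independent of the reduced word). -/
def Supp {V : Type} (Γ : SimpleGraph V) (g : RAAG Γ) : Set V :=
  {v | ∃ w : List (V × Bool), evalWord Γ w = g ∧ w.length = wlen Γ g ∧
        v ∈ w.map Prod.fst}

/-- `g` is cyclically reduced if its word length is minimal in its conjugacy class. -/
def CyclicallyReduced {V : Type} (Γ : SimpleGraph V) (g : RAAG Γ) : Prop :=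
  ∀ u : RAAG Γ, wlen Γ g ≤ wlen Γ (u⁻¹ * g * u)

/-- `g` is non-split if its support spans a connected subgraph of `Γ`. -/
def NonSplit {V : Type} (Γ : SimpleGraph V) (g : RAAG Γ) : Prop :=
  ((Γ.induce (Supp Γ g))).Connected

/-- `g` is strongly non-split if it is non-split and no generator disjointly
commutes with `g`. -/
def StronglyNonSplit {V : Type} (Γ : SimpleGraph V) (g : RAAG Γ) : Prop :=
  NonSplit Γ g ∧ ¬ ∃ v : V, v ∉ Supp Γ g ∧ ∀ u ∈ Supp Γ g, ¬ Γ.Adj v u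

/-- The set `S(g)` of starting generators of `g`. -/
def SGen {V : Type} (Γ : SimpleGraph V) (g : RAAG Γ) : Set V :=
  {v | ∃ (b : Bool) (h : RAAG Γ), g = raagLetter Γ (v, b) * h ∧
        wlen Γ g = 1 + wlen Γ h}

/-- `g` is SD-conical (w.r.t. a linear order on the vertices) if `S(g)` is a
singleton `{v₀}` and `v₀` does not commute with any smaller generator,
i.e. `{v, v₀} ∈ E(Γ)` for all `v < v₀`. -/
def SDConical {V : Type} (Γ : SimpleGraph V) (lo : LinearOrder V) (g : RAAG Γ) : Prop :=
  ∃ v₀ : V, SGen Γ g = {v₀} ∧ ∀ v : V, lo.lt v v₀ → Γ.Adj v v₀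

/-- `g` is primitive if it is nontrivial and not a proper power. -/
def RaagPrimitive {V : Type} (Γ : SimpleGraph V) (g : RAAG Γ) : Prop :=
  g ≠ 1 ∧ ∀ (u : RAAG Γ) (n : ℕ), g = u ^ n → n = 1

/-- The order on letters: extend the order on `V` so that each `v` is the
immediate predecessor of `v⁻¹`. -/
def letterLT {V : Type} (lo : LinearOrder V) (l m : V × Bool) : Prop :=
  lo.lt l.1 m.1 ∨ (l.1 = m.1 ∧ l.2 = true ∧ m.2 = false)

/-- `w` is the CGW-normal form `σ(g)` of `g`: the lexicographically largest
reduced word representing `g`. -/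
def NormalForm {V : Type} (Γ : SimpleGraph V) (lo : LinearOrder V)
    (w : List (V × Bool)) (g : RAAG Γ) : Prop :=
  evalWord Γ w = g ∧ w.length = wlen Γ g ∧
    ∀ w' : List (V × Bool), evalWord Γ w' = g → w'.length = wlen Γ g →
      w' = w ∨ List.Lex (letterLT lo) w' w

section RaagAux
open scoped Classical

variable {V : Type} (Γ : SimpleGraph V)

/-- inverse of a letter -/
def linv (l : V × Bool) : V × Bool := (l.1, !l.2)

lemma linv_linv (l : V × Bool) : linv (linv l) = l := by
  cases l with | mk v b => cases b <;> rfl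

@[simp] lemma linv_fst (l : V × Bool) : (linv l).1 = l.1 := rfl

/-- letters commute (vertices are non-adjacent, includes equal vertices). -/
def co (l m : V × Bool) : Prop := ¬ Γ.Adj l.1 m.1

lemma co_symm {l m} (h : co Γ l m) : co Γ m l := fun h' => h h'.symm

lemma co_of_fst {l m : V × Bool} (h : l.1 = m.1) : co Γ l m := by
  unfold co; rw [h]; exact Γ.irrefl

@[simp] lemma co_linv_left {l m} : co Γ (linv l) m ↔ co Γ l m := Iff.rfl
@[simp] lemma co_linv_right {l m} : co Γ l (linv m) ↔ co Γ l m := Iff.rfl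

lemma raagLetter_linv (l : V × Bool) :
    raagLetter Γ (linv l) = (raagLetter Γ l)⁻¹ := by
  cases l with | mk v b => cases b <;> simp [raagLetter, linv]

lemma raagGen_commute {v w : V} (hne : v ≠ w) (hadj : ¬ Γ.Adj v w) :
    Commute (raagGen Γ v) (raagGen Γ w) := by
  have hmem : (FreeGroup.of v * FreeGroup.of w * (FreeGroup.of v)⁻¹ * (FreeGroup.of w)⁻¹)
      ∈ raagRels Γ := ⟨v, w, hne, hadj, rfl⟩
  have h1 : (PresentedGroup.mk (raagRels Γ))
      (FreeGroup.of v * FreeGroup.of w * (FreeGroup.of v)⁻¹ * (FreeGroup.of w)⁻¹) = 1 := by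
    apply (QuotientGroup.eq_one_iff _).mpr
    exact Subgroup.subset_normalClosure hmem
  have h2 : raagGen Γ v * raagGen Γ w * (raagGen Γ v)⁻¹ * (raagGen Γ w)⁻¹ = 1 := by
    simpa [raagGen, PresentedGroup.of, map_mul, map_inv] using h1
  exact commutatorElement_eq_one_iff_commute.mp h2

lemma raagLetter_commute {l m : V × Bool} (h : co Γ l m) :
    Commute (raagLetter Γ l) (raagLetter Γ m) := by
  have base : Commute (raagGen Γ l.1) (raagGen Γ m.1) := by
    by_cases hv : l.1 = m.1
    · rw [hv]
    · exact raagGen_commute Γ hv h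
  cases l with | mk v b =>
  cases m with | mk w c =>
  simp only [raagLetter]
  cases b <;> cases c <;> simp only [if_true, if_false, Bool.false_eq_true] <;>
    first
      | exact base
      | exact base.inv_left
      | exact base.inv_right
      | exact base.inv_left.inv_right

@[simp] lemma evalWord_nil : evalWord Γ ([] : List (V × Bool)) = 1 := rfl

lemma evalWord_cons (x : V × Bool) (w : List (V × Bool)) :
    evalWord Γ (x :: w) = raagLetter Γ x * evalWord Γ w := by
  simp [evalWord]

lemma evalWord_append (a b : List (V × Bool)) :
    evalWord Γ (a ++ b) = evalWord Γ a * evalWord Γ b := by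
  simp [evalWord]

@[simp] lemma evalWord_singleton (x : V × Bool) :
    evalWord Γ [x] = raagLetter Γ x := by simp [evalWord]

/-- formal inverse of a word -/
def winv (w : List (V × Bool)) : List (V × Bool) := (w.map linv).reverse

@[simp] lemma winv_nil : winv ([] : List (V × Bool)) = [] := rfl

lemma winv_cons (x : V × Bool) (w : List (V × Bool)) :
    winv (x :: w) = winv w ++ [linv x] := by simp [winv]

lemma winv_append (a b : List (V × Bool)) :
    winv (a ++ b) = winv b ++ winv a := by simp [winv]

@[simp] lemma winv_singleton (x : V × Bool) : winv [x] = [linv x] := rfl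

@[simp] lemma winv_length (w : List (V × Bool)) : (winv w).length = w.length := by
  simp [winv]

lemma winv_winv (w : List (V × Bool)) : winv (winv w) = w := by
  induction w with
  | nil => rfl
  | cons x t ih => rw [winv_cons, winv_append, ih, winv_singleton, linv_linv]; rfl

lemma evalWord_winv (w : List (V × Bool)) :
    evalWord Γ (winv w) = (evalWord Γ w)⁻¹ := by
  induction w with
  | nil => simp
  | cons x t ih =>
      simp [winv_cons, evalWord_append, evalWord_cons, ih, raagLetter_linv, mul_inv_rev]

lemma commute_evalWord {l : V × Bool} {s : List (V × Bool)} (h : ∀ m ∈ s, co Γ m l) :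
    Commute (raagLetter Γ l) (evalWord Γ s) := by
  induction s with
  | nil => simp [Commute.one_right]
  | cons m t ih =>
      rw [evalWord_cons]
      exact (raagLetter_commute Γ (co_symm Γ (h m (by simp)))).mul_right
        (ih fun m' hm' => h m' (by simp [hm']))

end RaagAux
section RaagComb
open scoped Classical

variable {V : Type} (Γ : SimpleGraph V)

/-- `x⁻¹` can be cancelled against the first letter group of `w`. -/
def CanDel (x : V × Bool) : List (V × Bool) → Prop
  | [] => False
  | y :: w => y = linv x ∨ (co Γ y x ∧ CanDel x w)

def HasPair : List (V × Bool) → Prop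
  | [] => False
  | x :: w => CanDel Γ x w ∨ HasPair w

def Red (w : List (V × Bool)) : Prop := ¬ HasPair Γ w

@[simp] lemma canDel_nil (x : V × Bool) : ¬ CanDel Γ x [] := fun h => h

lemma canDel_cons {x y : V × Bool} {w} :
    CanDel Γ x (y :: w) ↔ (y = linv x ∨ (co Γ y x ∧ CanDel Γ x w)) := Iff.rfl

@[simp] lemma hasPair_nil : ¬ HasPair Γ [] := fun h => h

lemma hasPair_cons {x : V × Bool} {w} :
    HasPair Γ (x :: w) ↔ CanDel Γ x w ∨ HasPair Γ w := Iff.rfl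

lemma red_nil : Red Γ [] := hasPair_nil Γ

lemma red_cons {x : V × Bool} {w} :
    Red Γ (x :: w) ↔ ¬ CanDel Γ x w ∧ Red Γ w := by
  unfold Red; rw [hasPair_cons]; tauto

lemma canDel_of_append {x : V × Bool} {b c : List (V × Bool)} (hb : ∀ m ∈ b, co Γ m x) :
    CanDel Γ x (b ++ [linv x] ++ c) := by
  induction b with
  | nil => exact Or.inl rfl
  | cons m t ih =>
      exact Or.inr ⟨hb m (by simp), ih (fun m' h => hb m' (by simp [h]))⟩

lemma canDel_split {x : V × Bool} {w} (h : CanDel Γ x w) :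
    ∃ s t, w = s ++ [linv x] ++ t ∧ ∀ m ∈ s, co Γ m x := by
  induction w with
  | nil => cases h
  | cons y u ih =>
      rcases h with h | ⟨hc, h⟩
      · exact ⟨[], u, by simp [h], by simp⟩
      · obtain ⟨s, t, rfl, hs⟩ := ih h
        refine ⟨y :: s, t, by simp, ?_⟩
        intro m hm
        rcases List.mem_cons.mp hm with rfl | hm
        exacts [hc, hs m hm]

lemma hasPair_split {w} (h : HasPair Γ w) :
    ∃ a l b c, w = a ++ [l] ++ b ++ [linv l] ++ c ∧ ∀ m ∈ b, co Γ m l := by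
  induction w with
  | nil => cases h
  | cons x u ih =>
      rcases h with h | h
      · obtain ⟨s, t, rfl, hs⟩ := canDel_split Γ h
        exact ⟨[], x, s, t, by simp, hs⟩
      · obtain ⟨a, l, b, c, rfl, hb⟩ := ih h
        exact ⟨x :: a, l, b, c, by simp, hb⟩

lemma hasPair_of_split {a b c : List (V × Bool)} {l : V × Bool} (hb : ∀ m ∈ b, co Γ m l) :
    HasPair Γ (a ++ [l] ++ b ++ [linv l] ++ c) := by
  induction a with
  | nil =>
      apply (hasPair_cons Γ).mpr
      left
      have := canDel_of_append Γ (x := l) (c := c) hb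
      simpa using this
  | cons y t ih => exact (hasPair_cons Γ).mpr (Or.inr (by simpa using ih))

lemma red_winv {w} (h : Red Γ w) : Red Γ (winv w) := by
  intro hp
  obtain ⟨a, l, b, c, he, hb⟩ := hasPair_split Γ hp
  apply h
  have hw : w = winv (a ++ [l] ++ b ++ [linv l] ++ c) := by rw [← he, winv_winv]
  rw [hw]
  simp only [winv_append, winv_singleton, linv_linv, ← List.append_assoc]
  apply hasPair_of_split Γ
  intro m hm
  simp only [winv, List.mem_reverse, List.mem_map] at hm
  obtain ⟨m', hm', rfl⟩ := hm
  exact hb m' hm'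

lemma shorten {w} (h : HasPair Γ w) :
    ∃ w', evalWord Γ w' = evalWord Γ w ∧ w'.length + 2 = w.length := by
  obtain ⟨a, l, b, c, rfl, hb⟩ := hasPair_split Γ h
  refine ⟨a ++ b ++ c, ?_, by simp; omega⟩
  have hc : Commute (raagLetter Γ l) (evalWord Γ b) := commute_evalWord Γ hb
  simp only [evalWord_append, evalWord_singleton, raagLetter_linv, mul_assoc]
  congr 1
  rw [← mul_assoc, hc.eq, mul_assoc, mul_inv_cancel_left]

/-- one swap of adjacent commuting letters -/
inductive Sh : List (V × Bool) → List (V × Bool) → Prop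
  | swap (l m : V × Bool) (w) : co Γ l m → Sh (l :: m :: w) (m :: l :: w)
  | cons (x : V × Bool) {w w'} : Sh w w' → Sh (x :: w) (x :: w')

/-- shuffle equivalence -/
inductive SEq : List (V × Bool) → List (V × Bool) → Prop
  | of {w w'} : Sh Γ w w' → SEq w w'
  | refl (w) : SEq w w
  | symm {w w'} : SEq w w' → SEq w' w
  | trans {w₁ w₂ w₃} : SEq w₁ w₂ → SEq w₂ w₃ → SEq w₁ w₃

lemma sh_length {w w'} (h : Sh Γ w w') : w.length = w'.length := by
  induction h <;> simp [*]

lemma seq_length {w w'} (h : SEq Γ w w') : w.length = w'.length := by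
  induction h with
  | of h => exact sh_length Γ h
  | refl => rfl
  | symm _ ih => exact ih.symm
  | trans _ _ ih1 ih2 => exact ih1.trans ih2

lemma sh_eval {w w'} (h : Sh Γ w w') : evalWord Γ w = evalWord Γ w' := by
  induction h with
  | swap l m u hlm =>
      simp only [evalWord_cons, ← mul_assoc]
      rw [(raagLetter_commute Γ hlm).eq]
  | cons x _ ih => simp only [evalWord_cons, ih]

lemma seq_eval {w w'} (h : SEq Γ w w') : evalWord Γ w = evalWord Γ w' := by
  induction h with
  | of h => exact sh_eval Γ h
  | refl => rfl
  | symm _ ih => exact ih.symm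
  | trans _ _ ih1 ih2 => exact ih1.trans ih2

lemma seq_cons (x : V × Bool) {w w'} (h : SEq Γ w w') : SEq Γ (x :: w) (x :: w') := by
  induction h with
  | of h => exact SEq.of (Sh.cons x h)
  | refl => exact SEq.refl _
  | symm _ ih => exact SEq.symm ih
  | trans _ _ ih1 ih2 => exact SEq.trans ih1 ih2

lemma sh_symm {w w'} (h : Sh Γ w w') : Sh Γ w' w := by
  induction h with
  | swap l m u hlm => exact Sh.swap m l u (co_symm Γ hlm)
  | cons x _ ih => exact Sh.cons x ih

lemma canDel_sh {x : V × Bool} {w w'} (h : Sh Γ w w') (hc : CanDel Γ x w) :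
    CanDel Γ x w' := by
  induction h with
  | swap l m u hlm =>
      rcases hc with h1 | ⟨h1, h2 | ⟨h2, h3⟩⟩
      · refine Or.inr ⟨?_, Or.inl h1⟩
        have := co_symm Γ hlm
        rw [h1] at this
        exact this
      · exact Or.inl h2
      · exact Or.inr ⟨h2, Or.inr ⟨h1, h3⟩⟩
  | cons y hsh ih =>
      rcases hc with h1 | ⟨h1, h2⟩
      · exact Or.inl h1
      · exact Or.inr ⟨h1, ih h2⟩

lemma hasPair_sh {w w'} (h : Sh Γ w w') (hp : HasPair Γ w) : HasPair Γ w' := by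
  induction h with
  | swap l m u hlm =>
      rcases hp with (h1 | ⟨h1, h2⟩) | h2 | h3
      · exact Or.inl (Or.inl (by rw [h1, linv_linv]))
      · exact Or.inr (Or.inl h2)
      · exact Or.inl (Or.inr ⟨hlm, h2⟩)
      · exact Or.inr (Or.inr h3)
  | cons y hsh ih =>
      rcases hp with h1 | h2
      · exact Or.inl (canDel_sh Γ hsh h1)
      · exact Or.inr (ih h2)

lemma hasPair_seq {w w'} (h : SEq Γ w w') : HasPair Γ w ↔ HasPair Γ w' := by
  induction h with
  | of h => exact ⟨hasPair_sh Γ h, hasPair_sh Γ (sh_symm Γ h)⟩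
  | refl => exact Iff.rfl
  | symm _ ih => exact ih.symm
  | trans _ _ ih1 ih2 => exact ih1.trans ih2

lemma red_seq {w w'} (h : SEq Γ w w') : Red Γ w ↔ Red Γ w' :=
  not_congr (hasPair_seq Γ h)

/-- The action of a letter on words. -/
noncomputable def act (x : V × Bool) : List (V × Bool) → List (V × Bool)
  | [] => [x]
  | y :: w => if y = linv x then w else if co Γ y x then y :: act x w else x :: y :: w

@[simp] lemma act_nil (x : V × Bool) : act Γ x [] = [x] := rfl

lemma act_cons_del {x y : V × Bool} {w} (h : y = linv x) : act Γ x (y :: w) = w := by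
  simp [act, h]

lemma act_cons_co {x y : V × Bool} {w} (h1 : y ≠ linv x) (h2 : co Γ y x) :
    act Γ x (y :: w) = y :: act Γ x w := by
  simp [act, h1, h2]

lemma act_cons_block {x y : V × Bool} {w} (h1 : y ≠ linv x) (h2 : ¬ co Γ y x) :
    act Γ x (y :: w) = x :: y :: w := by
  simp [act, h1, h2]

lemma evalWord_act (x : V × Bool) (w) :
    evalWord Γ (act Γ x w) = raagLetter Γ x * evalWord Γ w := by
  induction w with
  | nil => simp
  | cons y t ih =>
      by_cases h1 : y = linv x
      · rw [act_cons_del Γ h1, h1, evalWord_cons, raagLetter_linv, ← mul_assoc,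
          mul_inv_cancel, one_mul]
      · by_cases h2 : co Γ y x
        · rw [act_cons_co Γ h1 h2, evalWord_cons, ih, evalWord_cons, ← mul_assoc,
            ← mul_assoc, (raagLetter_commute Γ h2).eq]
        · rw [act_cons_block Γ h1 h2, evalWord_cons, evalWord_cons]

lemma not_canDel_act {x y : V × Bool} {w} (hyx : co Γ y x) (hne : y ≠ linv x)
    (h : ¬ CanDel Γ y w) : ¬ CanDel Γ y (act Γ x w) := by
  induction w with
  | nil =>
      rw [act_nil]
      rintro (h1 | ⟨h1, h2⟩)
      · exact hne (by rw [h1, linv_linv])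
      · exact h2
  | cons z t ih =>
      have hz1 : z ≠ linv y := fun hc => h (Or.inl hc)
      have hz2 : ¬ (co Γ z y ∧ CanDel Γ y t) := fun hc => h (Or.inr hc)
      by_cases h1 : z = linv x
      · rw [act_cons_del Γ h1]
        intro hc
        have hco : co Γ z y := fun hadj => hyx (by rw [h1] at hadj; exact hadj.symm)
        exact hz2 ⟨hco, hc⟩
      · by_cases h2 : co Γ z x
        · rw [act_cons_co Γ h1 h2]
          rintro (hc | ⟨hc1, hc2⟩)
          · exact hz1 hc
          · exact (ih (fun hct => hz2 ⟨hc1, hct⟩)) hc2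
        · rw [act_cons_block Γ h1 h2]
          rintro (hc | ⟨hc1, hc2⟩)
          · exact hne (by rw [hc, linv_linv])
          · exact h hc2

lemma red_act {x : V × Bool} {w} (h : Red Γ w) : Red Γ (act Γ x w) := by
  induction w with
  | nil =>
      rw [act_nil]
      rintro (h1 | h1)
      exacts [h1, h1]
  | cons y t ih =>
      obtain ⟨hcd, ht⟩ := (red_cons Γ).mp h
      by_cases h1 : y = linv x
      · rw [act_cons_del Γ h1]; exact ht
      · by_cases h2 : co Γ y x
        · rw [act_cons_co Γ h1 h2]
          exact (red_cons Γ).mpr ⟨not_canDel_act Γ h2 h1 hcd, ih ht⟩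
        · rw [act_cons_block Γ h1 h2]
          refine (red_cons Γ).mpr ⟨?_, h⟩
          rintro (hc | ⟨hc1, hc2⟩)
          · exact h1 hc
          · exact h2 hc1

lemma act_seq_cons {x : V × Bool} {w} (h : ¬ CanDel Γ x w) : SEq Γ (act Γ x w) (x :: w) := by
  induction w with
  | nil => exact SEq.refl _
  | cons z t ih =>
      by_cases h1 : z = linv x
      · exact absurd (Or.inl h1) h
      · by_cases h2 : co Γ z x
        · rw [act_cons_co Γ h1 h2]
          have h3 : ¬ CanDel Γ x t := fun hc => h (Or.inr ⟨h2, hc⟩)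
          exact SEq.trans (seq_cons Γ z (ih h3)) (SEq.of (Sh.swap z x t h2))
        · rw [act_cons_block Γ h1 h2]; exact SEq.refl _

lemma act_act_linv {x : V × Bool} {w} (h : Red Γ w) :
    SEq Γ (act Γ x (act Γ (linv x) w)) w := by
  induction w with
  | nil =>
      rw [act_nil, act_cons_del Γ rfl]
      exact SEq.refl _
  | cons y t ih =>
      obtain ⟨hcd, ht⟩ := (red_cons Γ).mp h
      by_cases hyx : y = linv (linv x)
      · have hx : y = x := by rw [hyx, linv_linv]
        subst hx
        rw [act_cons_del Γ hyx]
        exact act_seq_cons Γ hcd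
      · by_cases h2 : co Γ y (linv x)
        · rw [act_cons_co Γ hyx h2]
          by_cases hy2 : y = linv x
          · rw [act_cons_del Γ hy2]
            subst hy2
            exact act_seq_cons Γ hcd
          · have h2' : co Γ y x := h2
            rw [act_cons_co Γ hy2 h2']
            exact seq_cons Γ y (ih ht)
        · rw [act_cons_block Γ hyx h2, act_cons_del Γ rfl]
          exact SEq.refl _

lemma act_act_comm {x z : V × Bool} (hne : x.1 ≠ z.1) (hadj : ¬ Γ.Adj x.1 z.1) {w}
    (h : Red Γ w) : SEq Γ (act Γ x (act Γ z w)) (act Γ z (act Γ x w)) := by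
  have hcxz : co Γ x z := hadj
  have hczx : co Γ z x := co_symm Γ hadj
  have hzlx : z ≠ linv x := fun hc => hne (by rw [hc]; rfl)
  have hxlz : x ≠ linv z := fun hc => hne (by rw [hc]; rfl)
  induction w with
  | nil =>
      rw [act_nil, act_nil, act_cons_co Γ hzlx hczx, act_cons_co Γ hxlz hcxz, act_nil, act_nil]
      exact SEq.of (Sh.swap z x [] hczx)
  | cons y t ih =>
      obtain ⟨hcd, ht⟩ := (red_cons Γ).mp h
      by_cases hyz : y = linv z
      · have hyfst : y.1 = z.1 := by rw [hyz]; rfl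
        have hylx : y ≠ linv x := fun hc => hne (by rw [← hyfst, hc]; rfl)
        have hcyx : co Γ y x := fun hadj' => hadj (by rw [hyfst] at hadj'; exact hadj'.symm)
        rw [act_cons_del Γ hyz, act_cons_co Γ hylx hcyx, act_cons_del Γ hyz]
        exact SEq.refl _
      · by_cases hyx : y = linv x
        · have hyfst : y.1 = x.1 := by rw [hyx]; rfl
          have hcyz : co Γ y z := fun hadj' => hadj (by rw [hyfst] at hadj'; exact hadj')
          rw [act_cons_del Γ hyx, act_cons_co Γ hyz hcyz, act_cons_del Γ hyx]
          exact SEq.refl _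
        · by_cases hcyz : co Γ y z <;> by_cases hcyx : co Γ y x
          · simp only [act_cons_co Γ hyz hcyz, act_cons_co Γ hyx hcyx]
            exact seq_cons Γ y (ih ht)
          · simp only [act_cons_co Γ hyz hcyz, act_cons_block Γ hyx hcyx,
              act_cons_co Γ hxlz hcxz]
            exact SEq.refl _
          · simp only [act_cons_block Γ hyz hcyz, act_cons_co Γ hzlx hczx,
              act_cons_co Γ hyx hcyx]
            exact SEq.refl _
          · simp only [act_cons_block Γ hyz hcyz, act_cons_co Γ hzlx hczx,
              act_cons_block Γ hyx hcyx, act_cons_co Γ hxlz hcxz]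
            exact SEq.of (Sh.swap z x (y :: t) hczx)

lemma act_sh {x : V × Bool} {w w'} (h : Sh Γ w w') :
    Red Γ w → SEq Γ (act Γ x w) (act Γ x w') := by
  induction h with
  | swap l m u hlm =>
      intro _
      by_cases h1 : l = linv x
      · by_cases hml : m = linv x
        · rw [act_cons_del Γ h1, act_cons_del Γ hml, h1, hml]
          exact SEq.refl _
        · have hm2 : co Γ m x := fun hadj => hlm (by rw [h1]; exact hadj.symm)
          simp only [act_cons_del Γ h1, act_cons_co Γ hml hm2]
          exact SEq.refl _
      · by_cases h2 : co Γ l x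
        · by_cases hml : m = linv x
          · simp only [act_cons_co Γ h1 h2, act_cons_del Γ hml]
            exact SEq.refl _
          · by_cases hm2 : co Γ m x
            · simp only [act_cons_co Γ h1 h2, act_cons_co Γ hml hm2]
              exact SEq.of (Sh.swap l m _ hlm)
            · simp only [act_cons_co Γ h1 h2, act_cons_block Γ hml hm2]
              exact SEq.trans (SEq.of (Sh.swap l x _ h2))
                (seq_cons Γ x (SEq.of (Sh.swap l m _ hlm)))
        · have hml : m ≠ linv x := fun he => h2 (by rw [he] at hlm; exact hlm)
          by_cases hm2 : co Γ m x
          · simp only [act_cons_block Γ h1 h2, act_cons_co Γ hml hm2]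
            exact SEq.trans (seq_cons Γ x (SEq.of (Sh.swap l m _ hlm)))
              (SEq.of (Sh.swap x m _ (co_symm Γ hm2)))
          · simp only [act_cons_block Γ h1 h2, act_cons_block Γ hml hm2]
            exact seq_cons Γ x (SEq.of (Sh.swap l m _ hlm))
  | cons y hsh ih =>
      intro hr
      obtain ⟨hcd, hu⟩ := (red_cons Γ).mp hr
      by_cases h1 : y = linv x
      · rw [act_cons_del Γ h1, act_cons_del Γ h1]
        exact SEq.of hsh
      · by_cases h2 : co Γ y x
        · rw [act_cons_co Γ h1 h2, act_cons_co Γ h1 h2]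
          exact seq_cons Γ y (ih hu)
        · rw [act_cons_block Γ h1 h2, act_cons_block Γ h1 h2]
          exact seq_cons Γ x (seq_cons Γ y (SEq.of hsh))

lemma act_seq {x : V × Bool} {w w'} (h : SEq Γ w w') :
    Red Γ w → SEq Γ (act Γ x w) (act Γ x w') := by
  induction h with
  | of h => exact act_sh Γ h
  | refl => exact fun _ => SEq.refl _
  | symm h ih =>
      intro hr
      exact SEq.symm (ih ((red_seq Γ h).mpr hr))
  | trans h1 h2 ih1 ih2 =>
      intro hr
      exact SEq.trans (ih1 hr) (ih2 ((red_seq Γ h1).mp hr))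

end RaagComb
section RaagQuot
open scoped Classical

variable {V : Type} (Γ : SimpleGraph V)

abbrev RW := {w : List (V × Bool) // Red Γ w}

instance rwSetoid : Setoid (RW Γ) where
  r s t := SEq Γ s.1 t.1
  iseqv := ⟨fun _ => SEq.refl _, SEq.symm, SEq.trans⟩

abbrev RQ := Quotient (rwSetoid Γ)

noncomputable def actQ (x : V × Bool) : RQ Γ → RQ Γ :=
  Quotient.map (fun s => (⟨act Γ x s.1, red_act Γ s.2⟩ : RW Γ))
    (fun s _ h => act_seq Γ h s.2)

lemma actQ_mk (x : V × Bool) (s : RW Γ) :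
    actQ Γ x (Quotient.mk (rwSetoid Γ) s) =
      Quotient.mk (rwSetoid Γ) ⟨act Γ x s.1, red_act Γ s.2⟩ := rfl

noncomputable def permQ (v : V) : Equiv.Perm (RQ Γ) where
  toFun := actQ Γ (v, true)
  invFun := actQ Γ (v, false)
  left_inv := by
    intro q
    refine Quotient.inductionOn q fun s => ?_
    rw [actQ_mk, actQ_mk]
    exact Quotient.sound (act_act_linv Γ (x := (v, false)) s.2)
  right_inv := by
    intro q
    refine Quotient.inductionOn q fun s => ?_
    rw [actQ_mk, actQ_mk]
    exact Quotient.sound (act_act_linv Γ (x := (v, true)) s.2)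

lemma permQ_apply (v : V) (q : RQ Γ) : permQ Γ v q = actQ Γ (v, true) q := rfl

lemma permQ_comm {v w : V} (hvw : v ≠ w) (hadj : ¬ Γ.Adj v w) :
    permQ Γ v * permQ Γ w = permQ Γ w * permQ Γ v := by
  apply Equiv.ext
  intro q
  rw [Equiv.Perm.mul_apply, Equiv.Perm.mul_apply]
  refine Quotient.inductionOn q fun s => ?_
  rw [permQ_apply, permQ_apply, permQ_apply, permQ_apply, actQ_mk, actQ_mk, actQ_mk, actQ_mk]
  exact Quotient.sound (act_act_comm Γ (x := (v, true)) (z := (w, true)) hvw hadj s.2)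

noncomputable def raagHom : RAAG Γ →* Equiv.Perm (RQ Γ) :=
  PresentedGroup.toGroup (f := fun v => permQ Γ v) (by
    rintro r ⟨v, w, hvw, hadj, rfl⟩
    simp only [map_mul, map_inv, FreeGroup.lift_apply_of]
    have hc := permQ_comm Γ hvw hadj
    exact commutatorElement_eq_one_iff_commute.mpr hc)

lemma raagHom_gen (v : V) : raagHom Γ (raagGen Γ v) = permQ Γ v :=
  PresentedGroup.toGroup.of _

lemma raagHom_letter (x : V × Bool) (q : RQ Γ) :
    raagHom Γ (raagLetter Γ x) q = actQ Γ x q := by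
  cases x with | mk v b =>
  cases b
  · show raagHom Γ (raagGen Γ v)⁻¹ q = _
    rw [map_inv, raagHom_gen, Equiv.Perm.inv_def]
    rfl
  · show raagHom Γ (raagGen Γ v) q = _
    rw [raagHom_gen]
    rfl

lemma raagHom_eval (w : List (V × Bool)) (hw : Red Γ w) :
    raagHom Γ (evalWord Γ w) (Quotient.mk (rwSetoid Γ) ⟨[], red_nil Γ⟩) =
      Quotient.mk (rwSetoid Γ) ⟨w, hw⟩ := by
  induction w with
  | nil => rw [evalWord_nil, map_one]; rfl
  | cons x t ih =>
      obtain ⟨hcd, ht⟩ := (red_cons Γ).mp hw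
      rw [evalWord_cons, map_mul, Equiv.Perm.mul_apply, ih ht, raagHom_letter, actQ_mk]
      exact Quotient.sound (act_seq_cons Γ hcd)

lemma length_eq_of_red_eval {w w' : List (V × Bool)} (hw : Red Γ w) (hw' : Red Γ w')
    (he : evalWord Γ w = evalWord Γ w') : w.length = w'.length := by
  have h1 := raagHom_eval Γ w hw
  have h2 := raagHom_eval Γ w' hw'
  rw [he] at h1
  exact seq_length Γ (Quotient.exact (h1.symm.trans h2))

end RaagQuot

section RaagLen
open scoped Classical

variable {V : Type} (Γ : SimpleGraph V)

lemma exists_word (g : RAAG Γ) : ∃ w, evalWord Γ w = g := by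
  refine PresentedGroup.induction_on (C := fun g => ∃ w, evalWord Γ w = g) g fun z => ?_
  refine FreeGroup.induction_on (C := fun z => ∃ w, evalWord Γ w = PresentedGroup.mk (raagRels Γ) z)
    z ⟨[], by rw [evalWord_nil, map_one]⟩
    (fun v => ⟨[(v, true)], rfl⟩) (fun v _ => ?_) (fun a b ha hb => ?_)
  · exact ⟨[(v, false)], rfl⟩
  · obtain ⟨wa, hwa⟩ := ha
    obtain ⟨wb, hwb⟩ := hb
    exact ⟨wa ++ wb, by rw [evalWord_append, hwa, hwb, map_mul]⟩

lemma wlen_le (w : List (V × Bool)) (g : RAAG Γ) (h : evalWord Γ w = g) :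
    wlen Γ g ≤ w.length := Nat.sInf_le ⟨w, h, rfl⟩

lemma wlen_spec (g : RAAG Γ) : ∃ w, evalWord Γ w = g ∧ w.length = wlen Γ g := by
  have hne : {n | ∃ w : List (V × Bool), evalWord Γ w = g ∧ w.length = n}.Nonempty := by
    obtain ⟨w, hw⟩ := exists_word Γ g
    exact ⟨w.length, w, hw, rfl⟩
  exact Nat.sInf_mem hne

lemma wlen_one : wlen Γ (1 : RAAG Γ) = 0 :=
  Nat.le_zero.mp (wlen_le Γ [] 1 (evalWord_nil Γ))

lemma wlen_eq_zero {g : RAAG Γ} : wlen Γ g = 0 ↔ g = 1 := by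
  constructor
  · intro h
    obtain ⟨w, hw, hl⟩ := wlen_spec Γ g
    rw [h] at hl
    rw [List.length_eq_zero_iff.mp hl] at hw
    rw [← hw, evalWord_nil]
  · rintro rfl
    exact wlen_one Γ

lemma wlen_inv (g : RAAG Γ) : wlen Γ g⁻¹ = wlen Γ g := by
  have key : ∀ a : RAAG Γ, wlen Γ a⁻¹ ≤ wlen Γ a := by
    intro a
    obtain ⟨w, hw, hl⟩ := wlen_spec Γ a
    have := wlen_le Γ (winv w) a⁻¹ (by rw [evalWord_winv, hw])
    rwa [winv_length, hl] at this
  refine le_antisymm (key g) ?_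
  have := key g⁻¹
  rwa [inv_inv] at this

lemma red_of_geodesic {w : List (V × Bool)} (h : w.length = wlen Γ (evalWord Γ w)) :
    Red Γ w := by
  intro hp
  obtain ⟨w', he, hl⟩ := shorten Γ hp
  have := wlen_le Γ w' _ he
  omega

lemma wlen_red {w : List (V × Bool)} (h : Red Γ w) :
    w.length = wlen Γ (evalWord Γ w) := by
  obtain ⟨w₀, he₀, hl₀⟩ := wlen_spec Γ (evalWord Γ w)
  have h₀ : Red Γ w₀ := red_of_geodesic Γ (by rw [he₀, hl₀])
  have := length_eq_of_red_eval Γ h h₀ he₀.symm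
  rw [this, hl₀]

lemma hasPair_of_long {w : List (V × Bool)} (h : wlen Γ (evalWord Γ w) < w.length) :
    HasPair Γ w := by
  by_contra hr
  have := wlen_red Γ hr
  omega

lemma mem_split {p q a r : List (V × Bool)} {x : V × Bool} (h : p ++ q = a ++ x :: r) :
    (∃ t, p = a ++ x :: t ∧ r = t ++ q) ∨ (∃ s, q = s ++ x :: r ∧ a = p ++ s) := by
  induction p generalizing a with
  | nil => exact Or.inr ⟨a, by simpa using h, by simp⟩
  | cons e p' ih =>
      cases a with
      | nil =>
          obtain ⟨rfl, h2⟩ : e = x ∧ p' ++ q = r := by simpa using h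
          exact Or.inl ⟨p', by simp, h2.symm⟩
      | cons f a' =>
          obtain ⟨rfl, h2⟩ : e = f ∧ p' ++ q = a' ++ x :: r := by simpa using h
          rcases ih h2 with ⟨t, h3, h4⟩ | ⟨s, h3, h4⟩
          · exact Or.inl ⟨t, by simp [h3], h4⟩
          · exact Or.inr ⟨s, h3, by simp [h4]⟩

lemma evalWord_middle (a t : List (V × Bool)) (x : V × Bool) :
    evalWord Γ (a ++ x :: t) = evalWord Γ a * (raagLetter Γ x * evalWord Γ t) := by
  rw [evalWord_append, evalWord_cons]

end RaagLen
section Grp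
variable {G : Type*} [Group G]

lemma grp1 {L A B : G} (h : Commute L A) :
    L * (A * (L⁻¹ * B)) * L⁻¹ = A * (B * L⁻¹) := by
  rw [show L * (A * (L⁻¹ * B)) * L⁻¹ = L * A * L⁻¹ * B * L⁻¹ from by group, h.eq]
  group

lemma grp2 {L A B : G} (h : Commute L B) :
    (A * (L * B)) * L⁻¹ = A * B := by
  rw [h.eq]; group

lemma grp3 {L A B : G} (h : Commute L A) :
    L * (A * (L⁻¹ * B)) = A * B := by
  rw [show L * (A * (L⁻¹ * B)) = L * A * L⁻¹ * B from by group, h.eq]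
  group

lemma grp4 {L A B : G} (h : Commute L B) :
    L * (A * (L * B)) * L⁻¹ = L * (A * B) := by
  rw [show L * (A * (L * B)) * L⁻¹ = L * A * (L * B) * L⁻¹ from by group, h.eq]
  group

lemma grp5 {L A z : G} (hc : Commute L A) :
    (L * z)⁻¹ * A * (L * z) = z⁻¹ * A * z := by
  rw [mul_inv_rev, show z⁻¹ * L⁻¹ * A * (L * z) = z⁻¹ * (L⁻¹ * (A * L)) * z from by group,
    ← hc.eq]
  group

end Grp

theorem stmt5 {V : Type} (Γ : SimpleGraph V) (g : RAAG Γ) :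
    CyclicallyReduced Γ g ↔
      ¬ ∃ u h : RAAG Γ, u ≠ 1 ∧ g = u⁻¹ * h * u ∧
        wlen Γ g = wlen Γ u⁻¹ + wlen Γ h + wlen Γ u := by
  constructor
  · rintro hcyc ⟨u, h, hu1, hdec, hlen⟩
    have h1 : wlen Γ g ≤ wlen Γ h := by
      have h2 := hcyc u⁻¹
      have he : u⁻¹⁻¹ * g * u⁻¹ = h := by rw [hdec]; group
      rwa [he] at h2
    have h2 : 1 ≤ wlen Γ u := Nat.one_le_iff_ne_zero.mpr fun h0 => hu1 ((wlen_eq_zero Γ).mp h0)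
    omega
  · intro hno
    by_contra hcyc
    apply hno
    unfold CyclicallyReduced at hcyc
    push_neg at hcyc
    obtain ⟨u, hu⟩ := hcyc
    set P : Set ℕ :=
      {k | ∃ z h : RAAG Γ, z ≠ 1 ∧ g = z⁻¹ * h * z ∧ wlen Γ h < wlen Γ g ∧ wlen Γ z = k}
      with hPdef
    have hPne : P.Nonempty := by
      refine ⟨wlen Γ u⁻¹, u⁻¹, u⁻¹ * g * u, ?_, by group, hu, rfl⟩
      intro h0
      rw [inv_eq_one] at h0
      subst h0
      simp at hu
    obtain ⟨z, h, hz1, hdec, hh, hk⟩ := Nat.sInf_mem hPne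
    have hk1 : 1 ≤ sInf P := by
      rw [← hk]
      exact Nat.one_le_iff_ne_zero.mpr fun h0 => hz1 ((wlen_eq_zero Γ).mp h0)
    obtain ⟨η, heη, hlη⟩ := wlen_spec Γ h
    obtain ⟨ζ, heζ, hlζ⟩ := wlen_spec Γ z
    have hredη : Red Γ η := red_of_geodesic Γ (by rw [heη, hlη])
    have hredζ : Red Γ ζ := red_of_geodesic Γ (by rw [heζ, hlζ])
    have hredζi : Red Γ (winv ζ) := red_winv Γ hredζ
    have heζi : evalWord Γ (winv ζ) = z⁻¹ := by rw [evalWord_winv, heζ]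
    have hW : evalWord Γ (winv ζ ++ η ++ ζ) = g := by
      rw [evalWord_append, evalWord_append, heζi, heη, heζ]
      exact hdec.symm
    have contra : ∀ u' h' : RAAG Γ, g = u'⁻¹ * h' * u' → wlen Γ h' ≤ wlen Γ h →
        wlen Γ u' ≤ sInf P - 1 → False := by
      intro u' h' hdec' hle' hk'
      have hu1' : u' ≠ 1 := by
        intro h0
        subst h0
        simp only [inv_one, one_mul, mul_one] at hdec'
        have e : wlen Γ g = wlen Γ h' := by rw [hdec']
        omega
      have hmem : wlen Γ u' ∈ P := ⟨u', h', hu1', hdec', lt_of_le_of_lt hle' hh, rfl⟩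
      have := Nat.sInf_le hmem
      omega
    by_cases hgl : wlen Γ g = (winv ζ ++ η ++ ζ).length
    · refine ⟨z, h, hz1, hdec, ?_⟩
      rw [wlen_inv]
      simp only [List.length_append, winv_length] at hgl
      omega
    · exfalso
      have hlt : wlen Γ g < (winv ζ ++ η ++ ζ).length :=
        lt_of_le_of_ne (wlen_le Γ _ _ hW) hgl
      have hp : HasPair Γ (winv ζ ++ η ++ ζ) := hasPair_of_long Γ (by rw [hW]; exact hlt)
      obtain ⟨a, l, b, c, hsplit, hcomm⟩ := hasPair_split Γ hp
      set L := raagLetter Γ l with hL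
      have hLinv : raagLetter Γ (linv l) = L⁻¹ := raagLetter_linv Γ l
      have hsplit' : winv ζ ++ (η ++ ζ) = a ++ l :: (b ++ linv l :: c) := by
        simpa [List.append_assoc] using hsplit
      rcases mem_split hsplit' with ⟨t, hζi, hr⟩ | ⟨s, hs, ha⟩
      · rcases mem_split (p := t) (q := η ++ ζ) hr.symm with ⟨t', ht', hc'⟩ | ⟨s, hs, hb⟩
        · -- cancelling pair inside ζ⁻¹ : contradicts reducedness
          apply hredζi
          rw [hζi, ht',
            show a ++ l :: (b ++ linv l :: t') = a ++ [l] ++ b ++ [linv l] ++ t' by simp]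
          exact hasPair_of_split Γ hcomm
        · rcases mem_split (p := η) (q := ζ) hs with ⟨t₂, hη, hc₂⟩ | ⟨s₂, hζ₂, hs₂⟩
          · -- CASE (1,2) : l in ζ⁻¹, l⁻¹ in η
            have hct : ∀ m ∈ t, co Γ m l := fun m hm => hcomm m (by rw [hb]; simp [hm])
            have hcs : ∀ m ∈ s, co Γ m l := fun m hm => hcomm m (by rw [hb]; simp [hm])
            have CT : Commute L (evalWord Γ t) := commute_evalWord Γ hct
            have CS : Commute L (evalWord Γ s) := commute_evalWord Γ hcs
            have hze : z⁻¹ = evalWord Γ a * (L * evalWord Γ t) := by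
              rw [← heζi, hζi, evalWord_middle]
            have hhe : h = evalWord Γ s * (L⁻¹ * evalWord Γ t₂) := by
              rw [← heη, hη, evalWord_middle, hLinv]
            refine contra (L * z) (L * h * L⁻¹) (by rw [hdec]; group) ?_ ?_
            · have e1 : evalWord Γ (s ++ (t₂ ++ [linv l])) = L * h * L⁻¹ := by
                rw [evalWord_append, evalWord_append, evalWord_singleton, hLinv, hhe, grp1 CS]
              have e2 := wlen_le Γ _ _ e1
              have e3 : η.length = s.length + (t₂.length + 1) := by
                have := congrArg List.length hη
                simpa using this
              simp only [List.length_append, List.length_singleton] at e2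
              omega
            · have e4 : evalWord Γ (a ++ t) = (L * z)⁻¹ := by
                rw [evalWord_append, mul_inv_rev, ← grp2 (A := evalWord Γ a) CT, ← hze]
              have e5 := wlen_le Γ _ _ e4
              have e6 : ζ.length = a.length + (t.length + 1) := by
                have := congrArg List.length hζi
                simpa using this
              have e7 : wlen Γ (L * z) = wlen Γ ((L * z)⁻¹) := (wlen_inv Γ _).symm
              simp only [List.length_append] at e5
              omega
          · -- CASE (1,3) : l in ζ⁻¹, l⁻¹ in ζ
            have hcη : ∀ m ∈ η, co Γ m l := fun m hm =>
              hcomm m (by rw [hb, hs₂]; simp [hm])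
            have hcs₂ : ∀ m ∈ s₂, co Γ m l := fun m hm =>
              hcomm m (by rw [hb, hs₂]; simp [hm])
            have CH : Commute L h := by
              rw [← heη]; exact commute_evalWord Γ hcη
            have CS₂ : Commute L (evalWord Γ s₂) := commute_evalWord Γ hcs₂
            have hze : z = evalWord Γ s₂ * (L⁻¹ * evalWord Γ c) := by
              rw [← heζ, hζ₂, evalWord_middle, hLinv]
            refine contra (L * z) h (by rw [hdec, grp5 CH]) (le_refl _) ?_
            · have e1 : evalWord Γ (s₂ ++ c) = L * z := by
                rw [evalWord_append, hze, grp3 CS₂]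
              have e2 := wlen_le Γ _ _ e1
              have e3 : ζ.length = s₂.length + (c.length + 1) := by
                have := congrArg List.length hζ₂
                simpa using this
              simp only [List.length_append] at e2
              omega
      · rcases mem_split (p := η) (q := ζ) hs with ⟨t, hη, hR⟩ | ⟨s₄, hζ₄, hs₄⟩
        · rcases mem_split (p := t) (q := ζ) hR.symm with ⟨t₃, ht₃, hc₃⟩ | ⟨s₃, hζ₃, hb₃⟩
          · -- cancelling pair inside η
            apply hredη
            rw [hη, ht₃,
              show s ++ l :: (b ++ linv l :: t₃) = s ++ [l] ++ b ++ [linv l] ++ t₃ by simp]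
            exact hasPair_of_split Γ hcomm
          · -- CASE (2,3) : l in η, l⁻¹ in ζ
            have hct : ∀ m ∈ t, co Γ m l := fun m hm => hcomm m (by rw [hb₃]; simp [hm])
            have hcs₃ : ∀ m ∈ s₃, co Γ m l := fun m hm => hcomm m (by rw [hb₃]; simp [hm])
            have CT : Commute L (evalWord Γ t) := commute_evalWord Γ hct
            have CS₃ : Commute L (evalWord Γ s₃) := commute_evalWord Γ hcs₃
            have hhe : h = evalWord Γ s * (L * evalWord Γ t) := by
              rw [← heη, hη, evalWord_middle]
            have hze : z = evalWord Γ s₃ * (L⁻¹ * evalWord Γ c) := by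
              rw [← heζ, hζ₃, evalWord_middle, hLinv]
            refine contra (L * z) (L * h * L⁻¹) (by rw [hdec]; group) ?_ ?_
            · have e1 : evalWord Γ ([l] ++ (s ++ t)) = L * h * L⁻¹ := by
                rw [evalWord_append, evalWord_append, evalWord_singleton, hhe, grp4 CT]
              have e2 := wlen_le Γ _ _ e1
              have e3 : η.length = s.length + (t.length + 1) := by
                have := congrArg List.length hη
                simpa using this
              simp only [List.length_append, List.length_singleton] at e2
              omega
            · have e1 : evalWord Γ (s₃ ++ c) = L * z := by
                rw [evalWord_append, hze, grp3 CS₃]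
              have e2 := wlen_le Γ _ _ e1
              have e3 : ζ.length = s₃.length + (c.length + 1) := by
                have := congrArg List.length hζ₃
                simpa using this
              simp only [List.length_append] at e2
              omega
        · -- cancelling pair inside ζ
          apply hredζ
          rw [hζ₄,
            show s₄ ++ l :: (b ++ linv l :: c) = s₄ ++ [l] ++ b ++ [linv l] ++ c by simp]
          exact hasPair_of_split Γ hcomm
end

section
/- In a right-angled Artin group G(Γ), an element g is cyclically reduced if and only if |g^n| = n|g| for all n ≥ 2. -/
namespace Stmt6Aux

open List

attribute [local instance] Classical.propDecidable

variable {V : Type} (Γ : SimpleGraph V)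

abbrev Ltr (V : Type) := V × Bool

@[simp] lemma evalWord_nil : evalWord Γ ([] : List (Ltr V)) = 1 := rfl

@[simp] lemma evalWord_cons (l : Ltr V) (w : List (Ltr V)) :
    evalWord Γ (l :: w) = raagLetter Γ l * evalWord Γ w := by
  simp [evalWord]

@[simp] lemma evalWord_append (a b : List (Ltr V)) :
    evalWord Γ (a ++ b) = evalWord Γ a * evalWord Γ b := by
  simp [evalWord]

@[simp] lemma evalWord_singleton (l : Ltr V) : evalWord Γ [l] = raagLetter Γ l := by
  simp [evalWord]

lemma raagLetter_neg (x : V) (s : Bool) :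
    raagLetter Γ (x, !s) = (raagLetter Γ (x, s))⁻¹ := by
  cases s <;> simp [raagLetter]

lemma gen_commute {v w : V} (hne : v ≠ w) (hadj : ¬ Γ.Adj v w) :
    Commute (raagGen Γ v) (raagGen Γ w) := by
  have hrel : (FreeGroup.of v * FreeGroup.of w * (FreeGroup.of v)⁻¹ * (FreeGroup.of w)⁻¹)
      ∈ raagRels Γ := ⟨v, w, hne, hadj, rfl⟩
  have h1 : PresentedGroup.mk (raagRels Γ)
      (FreeGroup.of v * FreeGroup.of w * (FreeGroup.of v)⁻¹ * (FreeGroup.of w)⁻¹) = 1 := by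
    exact (QuotientGroup.eq_one_iff _).2 (Subgroup.subset_normalClosure hrel)
  have h2 : raagGen Γ v * raagGen Γ w * (raagGen Γ v)⁻¹ * (raagGen Γ w)⁻¹ = 1 := by
    simpa [raagGen, PresentedGroup.of, map_mul, map_inv] using h1
  have h3 : raagGen Γ v * raagGen Γ w * (raagGen Γ v)⁻¹ = raagGen Γ w := by
    have := mul_eq_one_iff_eq_inv.mp h2
    rw [inv_inv] at this
    exact this
  exact mul_inv_eq_iff_eq_mul.mp h3

lemma letter_commute {p q : Ltr V} (hne : p.1 ≠ q.1) (hadj : ¬ Γ.Adj p.1 q.1) :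
    Commute (raagLetter Γ p) (raagLetter Γ q) := by
  have h := gen_commute Γ hne hadj
  rcases p with ⟨a, b⟩; rcases q with ⟨c, d⟩
  cases b <;> cases d
  · exact h.inv_left.inv_right
  · exact h.inv_left
  · exact h.inv_right
  · exact h

lemma eval_eq_mk (w : List (Ltr V)) :
    evalWord Γ w = PresentedGroup.mk (raagRels Γ) (FreeGroup.mk w) := by
  induction w with
  | nil => simp [← FreeGroup.one_eq_mk]
  | cons l t ih =>
    have h1 : FreeGroup.mk (l :: t) = FreeGroup.mk [l] * FreeGroup.mk t := by
      rw [FreeGroup.mul_mk]; rfl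
    rw [evalWord_cons, h1, map_mul, ih]
    congr 1
    rcases l with ⟨v, b⟩
    cases b
    · have : FreeGroup.mk [(v, false)] = (FreeGroup.of v)⁻¹ := by
        rw [show (FreeGroup.of v : FreeGroup V) = FreeGroup.mk [(v, true)] from rfl,
          FreeGroup.inv_mk]; rfl
      rw [this, map_inv]; rfl
    · rfl

lemma exists_word (g : RAAG Γ) : ∃ w : List (Ltr V), evalWord Γ w = g := by
  obtain ⟨f, rfl⟩ := PresentedGroup.mk_surjective (raagRels Γ) g
  exact ⟨f.toWord, by rw [eval_eq_mk, FreeGroup.mk_toWord]⟩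

lemma wlen_le {w : List (Ltr V)} {g : RAAG Γ} (h : evalWord Γ w = g) :
    wlen Γ g ≤ w.length := Nat.sInf_le ⟨w, h, rfl⟩

lemma exists_min_word (g : RAAG Γ) :
    ∃ w : List (Ltr V), evalWord Γ w = g ∧ w.length = wlen Γ g := by
  obtain ⟨w, hw⟩ := exists_word Γ g
  have := Nat.sInf_mem (⟨w.length, w, hw, rfl⟩ :
    {n | ∃ w : List (Ltr V), evalWord Γ w = g ∧ w.length = n}.Nonempty)
  exact this

lemma wlen_mul_le (g h : RAAG Γ) : wlen Γ (g * h) ≤ wlen Γ g + wlen Γ h := by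
  obtain ⟨a, ha, hal⟩ := exists_min_word Γ g
  obtain ⟨b, hb, hbl⟩ := exists_min_word Γ h
  have : evalWord Γ (a ++ b) = g * h := by rw [evalWord_append, ha, hb]
  simpa [hal, hbl] using wlen_le Γ this

def invWord (w : List (Ltr V)) : List (Ltr V) := (w.reverse).map (fun l => (l.1, !l.2))

lemma evalWord_invWord (w : List (Ltr V)) :
    evalWord Γ (invWord w) = (evalWord Γ w)⁻¹ := by
  induction w with
  | nil => simp [invWord]
  | cons l t ih =>
    rcases l with ⟨x, s⟩
    have h1 : invWord ((x, s) :: t) = invWord t ++ [(x, !s)] := by simp [invWord]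
    rw [h1, evalWord_append, ih, evalWord_singleton, evalWord_cons, raagLetter_neg,
      mul_inv_rev]

lemma wlen_inv (g : RAAG Γ) : wlen Γ g⁻¹ ≤ wlen Γ g := by
  obtain ⟨a, ha, hal⟩ := exists_min_word Γ g
  have : evalWord Γ (invWord a) = g⁻¹ := by rw [evalWord_invWord, ha]
  have h := wlen_le Γ this
  simpa [invWord, hal] using h

lemma wlen_one : wlen Γ (1 : RAAG Γ) = 0 :=
  Nat.le_zero.mp (wlen_le Γ (evalWord_nil Γ))

lemma wlen_pow_le (g : RAAG Γ) (n : ℕ) : wlen Γ (g ^ n) ≤ n * wlen Γ g := by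
  induction n with
  | zero => simp [wlen_one]
  | succ k ih =>
    calc wlen Γ (g ^ (k + 1)) = wlen Γ (g ^ k * g) := by rw [pow_succ]
    _ ≤ wlen Γ (g ^ k) + wlen Γ g := wlen_mul_le Γ _ _
    _ ≤ k * wlen Γ g + wlen Γ g := by omega
    _ = (k + 1) * wlen Γ g := by ring

lemma easy_dir (g : RAAG Γ) (h : ∀ n : ℕ, 2 ≤ n → wlen Γ (g ^ n) = n * wlen Γ g) :
    CyclicallyReduced Γ g := by
  intro u
  by_contra hc
  push_neg at hc
  set k := wlen Γ (u⁻¹ * g * u) with hk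
  set L := wlen Γ g with hL
  set n := 2 * wlen Γ u + 2 with hn
  have hgn : g ^ n = u * (u⁻¹ * g * u) ^ n * u⁻¹ := by
    have : g = u * (u⁻¹ * g * u) * u⁻¹ := by group
    calc g ^ n = (MulAut.conj u (u⁻¹ * g * u)) ^ n := by
          rw [MulAut.conj_apply]; exact congrArg (· ^ n) this
    _ = MulAut.conj u ((u⁻¹ * g * u) ^ n) := (map_pow _ _ _).symm
    _ = u * (u⁻¹ * g * u) ^ n * u⁻¹ := MulAut.conj_apply _ _
  have h1 : wlen Γ (g ^ n) ≤ wlen Γ u + n * k + wlen Γ u := by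
    calc wlen Γ (g ^ n) ≤ wlen Γ (u * (u⁻¹ * g * u) ^ n) + wlen Γ u⁻¹ := by
          rw [hgn]; exact wlen_mul_le Γ _ _
    _ ≤ wlen Γ u + wlen Γ ((u⁻¹ * g * u) ^ n) + wlen Γ u⁻¹ := by
          have := wlen_mul_le Γ u ((u⁻¹ * g * u) ^ n); omega
    _ ≤ wlen Γ u + n * k + wlen Γ u := by
          have h2 := wlen_pow_le Γ (u⁻¹ * g * u) n
          rw [← hk] at h2
          have h3 := wlen_inv Γ u
          omega
  rw [h n (by omega)] at h1
  have hkL : k + 1 ≤ L := hc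
  have h4 : n * (k + 1) ≤ n * L := Nat.mul_le_mul_left n hkL
  rw [Nat.mul_succ] at h4
  omega

end Stmt6Aux

namespace Stmt6Aux

open List

attribute [local instance] Classical.propDecidable

variable {V : Type} (Γ : SimpleGraph V)

/-- `p` depends on the vertex `x` (same vertex or adjacent, i.e. non-commuting). -/
def Dep (x : V) (p : Ltr V) : Prop := p.1 = x ∨ Γ.Adj p.1 x

/-- the projection on letters depending on `x`. -/
noncomputable def pf (x : V) (w : List (Ltr V)) : List (Ltr V) :=
  w.filter (fun p => decide (Dep Γ x p))

@[simp] lemma pf_nil (x : V) : pf Γ x [] = [] := rfl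

lemma pf_cons_dep {x : V} {p : Ltr V} (h : Dep Γ x p) (w : List (Ltr V)) :
    pf Γ x (p :: w) = p :: pf Γ x w := by simp [pf, h]

lemma pf_cons_indep {x : V} {p : Ltr V} (h : ¬ Dep Γ x p) (w : List (Ltr V)) :
    pf Γ x (p :: w) = pf Γ x w := by simp [pf, h]

lemma pf_append (x : V) (a b : List (Ltr V)) :
    pf Γ x (a ++ b) = pf Γ x a ++ pf Γ x b := filter_append a b

lemma pf_eq_nil_of_indep {x : V} {w : List (Ltr V)} (h : ∀ p ∈ w, ¬ Dep Γ x p) :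
    pf Γ x w = [] := by
  simp only [pf, filter_eq_nil_iff]
  intro p hp
  simpa using h p hp

lemma pf_reverse (x : V) (w : List (Ltr V)) :
    pf Γ x w.reverse = (pf Γ x w).reverse := filter_reverse

lemma mem_pf_vertex {x : V} {w : List (Ltr V)} {p : Ltr V} (h : p ∈ pf Γ x w) :
    Dep Γ x p := by
  have := of_mem_filter h
  simpa using this

lemma dep_self (x : V) (s : Bool) : Dep Γ x (x, s) := Or.inl rfl

/-- A "cancelling pattern": two consecutive opposite letters on vertex `x`. -/
def Pat (x : V) (t : List (Ltr V)) : Prop :=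
  ∃ (s : Bool) (i : ℕ), t[i]? = some (x, s) ∧ t[i+1]? = some (x, !s)

def HasPairP (w : List (Ltr V)) : Prop := ∃ x : V, Pat x (pf Γ x w)

def NoPairP (w : List (Ltr V)) : Prop := ¬ HasPairP Γ w

/-- `m` is the first letter of `w` depending on its own vertex
("`m` can be shuffled to the front"). -/
def HeadP (m : Ltr V) (w : List (Ltr V)) : Prop := (pf Γ m.1 w).head? = some m

/-- `m` can be shuffled to the back. -/
def LastP (m : Ltr V) (w : List (Ltr V)) : Prop := (pf Γ m.1 w).getLast? = some m

/-- elementary commutation of two adjacent commuting letters. -/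
def SwapStep (w w' : List (Ltr V)) : Prop :=
  ∃ (a b : List (Ltr V)) (l m : Ltr V), l.1 ≠ m.1 ∧ ¬ Γ.Adj l.1 m.1 ∧
    w = a ++ l :: m :: b ∧ w' = a ++ m :: l :: b

/-- shuffle equivalence. -/
def SEq (w w' : List (Ltr V)) : Prop := Relation.EqvGen (SwapStep Γ) w w'

lemma SwapStep.symm' {w w' : List (Ltr V)} (h : SwapStep Γ w w') : SwapStep Γ w' w := by
  obtain ⟨a, b, l, m, h1, h2, h3, h4⟩ := h
  exact ⟨a, b, m, l, Ne.symm h1, fun hA => h2 (Γ.adj_symm hA), h4, h3⟩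

lemma SEq.refl' (w : List (Ltr V)) : SEq Γ w w := Relation.EqvGen.refl w
lemma SEq.symm' {w w'} (h : SEq Γ w w') : SEq Γ w' w := Relation.EqvGen.symm _ _ h
lemma SEq.trans' {w₁ w₂ w₃} (h1 : SEq Γ w₁ w₂) (h2 : SEq Γ w₂ w₃) : SEq Γ w₁ w₃ :=
  Relation.EqvGen.trans _ _ _ h1 h2
lemma SEq.of_step {w w'} (h : SwapStep Γ w w') : SEq Γ w w' := Relation.EqvGen.rel _ _ h

lemma SEq_invariant {P : List (Ltr V) → Prop}
    (hstep : ∀ u v, SwapStep Γ u v → (P u ↔ P v)) :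
    ∀ {w w'}, SEq Γ w w' → (P w ↔ P w') := by
  intro w w' h
  induction h with
  | rel u v hs => exact hstep u v hs
  | refl => exact Iff.rfl
  | symm _ _ _ ih => exact ih.symm
  | trans _ _ _ _ _ ih1 ih2 => exact ih1.trans ih2

lemma evalWord_swapStep {w w'} (h : SwapStep Γ w w') : evalWord Γ w = evalWord Γ w' := by
  obtain ⟨a, b, l, m, h1, h2, rfl, rfl⟩ := h
  have hc := letter_commute Γ h1 h2
  simp only [evalWord_append, evalWord_cons]
  rw [← mul_assoc (raagLetter Γ l), hc, mul_assoc]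

lemma evalWord_SEq {w w'} (h : SEq Γ w w') : evalWord Γ w = evalWord Γ w' := by
  induction h with
  | rel u v hs => exact evalWord_swapStep Γ hs
  | refl => rfl
  | symm _ _ _ ih => exact ih.symm
  | trans _ _ _ _ _ ih1 ih2 => exact ih1.trans ih2

lemma length_SEq {w w'} (h : SEq Γ w w') : w.length = w'.length := by
  induction h with
  | rel u v hs => obtain ⟨a, b, l, m, _, _, rfl, rfl⟩ := hs; simp
  | refl => rfl
  | symm _ _ _ ih => exact ih.symm
  | trans _ _ _ _ _ ih1 ih2 => exact ih1.trans ih2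

lemma SwapStep.cons {w w'} (l : Ltr V) (h : SwapStep Γ w w') :
    SwapStep Γ (l :: w) (l :: w') := by
  obtain ⟨a, b, p, q, h1, h2, rfl, rfl⟩ := h
  exact ⟨l :: a, b, p, q, h1, h2, rfl, rfl⟩

lemma SEq.cons {w w'} (l : Ltr V) (h : SEq Γ w w') : SEq Γ (l :: w) (l :: w') := by
  induction h with
  | rel u v hs => exact SEq.of_step Γ (hs.cons Γ l)
  | refl => exact SEq.refl' Γ _
  | symm _ _ _ ih => exact ih.symm' _
  | trans _ _ _ _ _ ih1 ih2 => exact (ih1).trans' _ ih2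

/-- A letter commuting with a block can be pushed through it. -/
lemma SEq.front {x : V} {m : Ltr V} (hm : m.1 = x) :
    ∀ (a b : List (Ltr V)), (∀ p ∈ a, ¬ Dep Γ x p) →
      SEq Γ (m :: (a ++ b)) (a ++ m :: b) := by
  intro a
  induction a with
  | nil => intro b _; exact SEq.refl' Γ _
  | cons p t ih =>
    intro b hp
    have hpt : ¬ Dep Γ x p := hp p (by simp)
    have h1 : SwapStep Γ (m :: p :: (t ++ b)) (p :: m :: (t ++ b)) := by
      refine ⟨[], t ++ b, m, p, ?_, ?_, rfl, rfl⟩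
      · rw [hm]; intro hc; exact hpt (Or.inl hc.symm)
      · rw [hm]; intro hc; exact hpt (Or.inr (Γ.adj_symm hc))
    have h2 : SEq Γ (p :: m :: (t ++ b)) (p :: (t ++ m :: b)) :=
      SEq.cons Γ p (ih b (fun q hq => hp q (by simp [hq])))
    exact ((SEq.of_step Γ h1).trans' Γ h2)

end Stmt6Aux

namespace Stmt6Aux

open List

attribute [local instance] Classical.propDecidable

variable {V : Type} (Γ : SimpleGraph V)

lemma getElem?_mid (A B : List (Ltr V)) (l m : Ltr V) :
    (A ++ l :: m :: B)[A.length]? = some l ∧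
      (A ++ l :: m :: B)[A.length + 1]? = some m := by
  constructor
  · rw [getElem?_append_right (le_refl _)]
    simp
  · rw [getElem?_append_right (by omega)]
    have : A.length + 1 - A.length = 1 := by omega
    rw [this]
    simp

lemma getElem?_swap_ne (A B : List (Ltr V)) (l m : Ltr V) (j : ℕ)
    (hj : j ≠ A.length) (hj2 : j ≠ A.length + 1) :
    (A ++ l :: m :: B)[j]? = (A ++ m :: l :: B)[j]? := by
  rcases lt_or_ge j A.length with h | h
  · rw [getElem?_append_left h, getElem?_append_left h]
  · have h2 : A.length + 2 ≤ j := by omega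
    rw [getElem?_append_right (by omega), getElem?_append_right (by omega)]
    obtain ⟨k, hk⟩ : ∃ k, j - A.length = k + 2 := ⟨j - A.length - 2, by omega⟩
    rw [hk]
    simp

lemma pat_swap {x : V} {A B : List (Ltr V)} {l m : Ltr V} (hl : l.1 ≠ x) (hm : m.1 ≠ x)
    (h : Pat x (A ++ l :: m :: B)) : Pat x (A ++ m :: l :: B) := by
  obtain ⟨s, i, h1, h2⟩ := h
  have hmid := getElem?_mid A B l m
  have hi1 : i ≠ A.length := by
    intro hc; rw [hc, hmid.1] at h1
    exact hl (by injection h1 with h'; rw [h']) 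
  have hi2 : i ≠ A.length + 1 := by
    intro hc; rw [hc, hmid.2] at h1
    exact hm (by injection h1 with h'; rw [h'])
  have hi3 : i + 1 ≠ A.length := by
    intro hc; rw [hc, hmid.1] at h2
    exact hl (by injection h2 with h'; rw [h'])
  have hi4 : i + 1 ≠ A.length + 1 := by omega
  exact ⟨s, i, by rw [← getElem?_swap_ne A B l m i hi1 hi2]; exact h1,
    by rw [← getElem?_swap_ne A B l m (i+1) hi3 hi4]; exact h2⟩

lemma head_swap {m₀ : Ltr V} {A B : List (Ltr V)} {l m : Ltr V}
    (hl : l.1 ≠ m₀.1) (hm : m.1 ≠ m₀.1)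
    (h : (A ++ l :: m :: B).head? = some m₀) : (A ++ m :: l :: B).head? = some m₀ := by
  cases A with
  | nil =>
    simp only [nil_append, head?_cons] at h
    exact absurd (by injection h with h'; rw [h']) hl
  | cons p t => simpa using h

/-- Key structure lemma: the effect of a swap on a projection `pf x`. -/
lemma pf_swapStep {w w' : List (Ltr V)} (h : SwapStep Γ w w') (y : V) :
    pf Γ y w = pf Γ y w' ∨
      ∃ (A B : List (Ltr V)) (l m : Ltr V), l.1 ≠ y ∧ m.1 ≠ y ∧
        pf Γ y w = A ++ l :: m :: B ∧ pf Γ y w' = A ++ m :: l :: B := by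
  obtain ⟨a, b, l, m, h1, h2, rfl, rfl⟩ := h
  by_cases hdl : Dep Γ y l <;> by_cases hdm : Dep Γ y m
  · -- both dependent: then both have vertex ≠ y
    have hly : l.1 ≠ y := by
      intro hc
      rcases hdm with h3 | h3
      · exact h1 (by rw [h3, hc])
      · exact h2 (Γ.adj_symm (by rwa [hc]))
    have hmy : m.1 ≠ y := by
      intro hc
      rcases hdl with h3 | h3
      · exact h1 (by rw [h3, hc])
      · exact h2 (by rwa [hc])
    right
    refine ⟨pf Γ y a, pf Γ y b, l, m, hly, hmy, ?_, ?_⟩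
    · rw [pf_append, pf_cons_dep Γ hdl, pf_cons_dep Γ hdm]
    · rw [pf_append, pf_cons_dep Γ hdm, pf_cons_dep Γ hdl]
  · left
    rw [pf_append, pf_append, pf_cons_dep Γ hdl, pf_cons_indep Γ hdm,
      pf_cons_indep Γ hdm, pf_cons_dep Γ hdl]
  · left
    rw [pf_append, pf_append, pf_cons_dep Γ hdm, pf_cons_indep Γ hdl,
      pf_cons_indep Γ hdl, pf_cons_dep Γ hdm]
  · left
    rw [pf_append, pf_append, pf_cons_indep Γ hdl, pf_cons_indep Γ hdm,
      pf_cons_indep Γ hdm, pf_cons_indep Γ hdl]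

lemma Pat_swapStep {w w' : List (Ltr V)} (h : SwapStep Γ w w') (x : V) :
    Pat x (pf Γ x w) ↔ Pat x (pf Γ x w') := by
  constructor
  · intro hp
    rcases pf_swapStep Γ h x with he | ⟨A, B, l, m, hl, hm, h3, h4⟩
    · rwa [← he]
    · rw [h4]; rw [h3] at hp; exact pat_swap hl hm hp
  · intro hp
    rcases pf_swapStep Γ (h.symm' Γ) x with he | ⟨A, B, l, m, hl, hm, h3, h4⟩
    · rwa [← he]
    · rw [h4]; rw [h3] at hp; exact pat_swap hl hm hp

lemma HasPairP_SEq {w w' : List (Ltr V)} (h : SEq Γ w w') :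
    HasPairP Γ w ↔ HasPairP Γ w' := by
  refine SEq_invariant Γ (fun u v hs => ?_) h
  exact exists_congr (fun x => Pat_swapStep Γ hs x)

lemma HeadP_SEq {w w' : List (Ltr V)} (h : SEq Γ w w') (m₀ : Ltr V) :
    HeadP Γ m₀ w ↔ HeadP Γ m₀ w' := by
  refine SEq_invariant Γ (fun u v hs => ?_) h
  constructor
  · intro hp
    rcases pf_swapStep Γ hs m₀.1 with he | ⟨A, B, l, m, hl, hm, h3, h4⟩
    · unfold HeadP at *; rwa [← he]
    · unfold HeadP at *; rw [h4]; rw [h3] at hp; exact head_swap hl hm hp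
  · intro hp
    rcases pf_swapStep Γ (hs.symm' Γ) m₀.1 with he | ⟨A, B, l, m, hl, hm, h3, h4⟩
    · unfold HeadP at *; rwa [← he]
    · unfold HeadP at *; rw [h4]; rw [h3] at hp; exact head_swap hl hm hp

lemma SwapStep.reverse {w w' : List (Ltr V)} (h : SwapStep Γ w w') :
    SwapStep Γ w.reverse w'.reverse := by
  obtain ⟨a, b, l, m, h1, h2, rfl, rfl⟩ := h
  refine ⟨b.reverse, a.reverse, m, l, Ne.symm h1, fun hA => h2 (Γ.adj_symm hA), ?_, ?_⟩ <;> simp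

lemma SEq.reverse {w w' : List (Ltr V)} (h : SEq Γ w w') : SEq Γ w.reverse w'.reverse := by
  induction h with
  | rel u v hs => exact SEq.of_step Γ (hs.reverse Γ)
  | refl => exact SEq.refl' Γ _
  | symm _ _ _ ih => exact ih.symm' Γ
  | trans _ _ _ _ _ ih1 ih2 => exact ih1.trans' Γ ih2

lemma LastP_iff_headP_reverse (m₀ : Ltr V) (w : List (Ltr V)) :
    LastP Γ m₀ w ↔ HeadP Γ m₀ w.reverse := by
  unfold LastP HeadP
  rw [pf_reverse, head?_reverse]

lemma LastP_SEq {w w' : List (Ltr V)} (h : SEq Γ w w') (m₀ : Ltr V) :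
    LastP Γ m₀ w ↔ LastP Γ m₀ w' := by
  rw [LastP_iff_headP_reverse, LastP_iff_headP_reverse]
  exact HeadP_SEq Γ (h.reverse Γ) m₀

end Stmt6Aux

namespace Stmt6Aux

open List

attribute [local instance] Classical.propDecidable

variable {V : Type} (Γ : SimpleGraph V)

lemma headP_decomp {m : Ltr V} {w : List (Ltr V)} (h : HeadP Γ m w) :
    ∃ a b, w = a ++ m :: b ∧ ∀ p ∈ a, ¬ Dep Γ m.1 p := by
  unfold HeadP at h
  obtain ⟨t, ht⟩ : ∃ t, pf Γ m.1 w = m :: t := by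
    cases hpf : pf Γ m.1 w with
    | nil => rw [hpf] at h; simp at h
    | cons q t =>
      rw [hpf] at h
      simp only [head?_cons, Option.some.injEq] at h
      exact ⟨t, by rw [h]⟩
  rw [pf] at ht
  obtain ⟨a, b, h1, h2, _, _⟩ := filter_eq_cons_iff.mp ht
  exact ⟨a, b, h1, fun p hp => by simpa using h2 p hp⟩

lemma headP_intro {m : Ltr V} {a b : List (Ltr V)} (hm : Dep Γ m.1 m)
    (ha : ∀ p ∈ a, ¬ Dep Γ m.1 p) : HeadP Γ m (a ++ m :: b) := by
  unfold HeadP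
  rw [pf_append, pf_eq_nil_of_indep Γ ha, pf_cons_dep Γ hm]
  rfl

lemma lastP_decomp {m : Ltr V} {w : List (Ltr V)} (h : LastP Γ m w) :
    ∃ a b, w = a ++ m :: b ∧ ∀ p ∈ b, ¬ Dep Γ m.1 p := by
  rw [LastP_iff_headP_reverse] at h
  obtain ⟨a, b, h1, h2⟩ := headP_decomp Γ h
  refine ⟨b.reverse, a.reverse, ?_, fun p hp => h2 p (by simpa using hp)⟩
  have := congrArg List.reverse h1
  simpa using this

lemma lastP_intro {m : Ltr V} {a b : List (Ltr V)} (hm : Dep Γ m.1 m)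
    (hb : ∀ p ∈ b, ¬ Dep Γ m.1 p) : LastP Γ m (a ++ m :: b) := by
  rw [LastP_iff_headP_reverse]
  have h1 : (a ++ m :: b).reverse = b.reverse ++ m :: a.reverse := by simp
  rw [h1]
  exact headP_intro Γ hm (fun p hp => hb p (by simpa using hp))

lemma filter_decomp {P : Ltr V → Bool} {w A B : List (Ltr V)} {m : Ltr V}
    (h : w.filter P = A ++ m :: B) :
    ∃ a b, w = a ++ m :: b ∧ a.filter P = A ∧ b.filter P = B := by
  induction w generalizing A with
  | nil => simp at h
  | cons p t ih =>
    by_cases hp : P p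
    · rw [filter_cons_of_pos hp] at h
      cases A with
      | nil =>
        simp only [nil_append] at h
        have h1 : p = m := by injection h
        have h2 : t.filter P = B := by injection h
        exact ⟨[], t, by simp [h1], by simp, h2⟩
      | cons A₀ A' =>
        have h1 : p = A₀ := by injection h
        have h2 : t.filter P = A' ++ m :: B := by injection h
        obtain ⟨a, b, h3, h4, h5⟩ := ih h2
        exact ⟨p :: a, b, by simp [h3], by rw [filter_cons_of_pos hp, h4, h1], h5⟩
    · rw [filter_cons_of_neg hp] at h
      obtain ⟨a, b, h3, h4, h5⟩ := ih h
      exact ⟨p :: a, b, by simp [h3], by rw [filter_cons_of_neg hp, h4], h5⟩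

lemma two_consec_decomp {α : Type*} :
    ∀ (t : List α) (i : ℕ) (p q : α), t[i]? = some p → t[i+1]? = some q →
      ∃ A B, t = A ++ p :: q :: B := by
  intro t
  induction t with
  | nil => intro i p q h1 _; simp at h1
  | cons r rest ih =>
    intro i p q h1 h2
    cases i with
    | zero =>
      have hr : r = p := by simpa using h1
      have h3 : rest[0]? = some q := by simpa using h2
      cases rest with
      | nil => simp at h3
      | cons r2 rest2 =>
        have : r2 = q := by simpa using h3
        exact ⟨[], rest2, by simp [hr, this]⟩
    | succ j =>
      have h1' : rest[j]? = some p := by simpa using h1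
      have h2' : rest[j+1]? = some q := by simpa using h2
      obtain ⟨A, B, hAB⟩ := ih j p q h1' h2'
      exact ⟨r :: A, B, by simp [hAB]⟩

/-- From a cancelling pattern to a decomposition of the word. -/
lemma pat_decomp {x : V} {w : List (Ltr V)} (h : Pat x (pf Γ x w)) :
    ∃ (s : Bool) (a b c : List (Ltr V)), w = a ++ (x, s) :: (b ++ (x, !s) :: c) ∧
      ∀ p ∈ b, ¬ Dep Γ x p := by
  obtain ⟨s, i, h1, h2⟩ := h
  obtain ⟨A, B, hAB⟩ := two_consec_decomp _ i _ _ h1 h2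
  rw [pf] at hAB
  obtain ⟨a, b1, hw, _, hb1⟩ := filter_decomp hAB
  obtain ⟨b, c, hb, hindep, _, _⟩ := filter_eq_cons_iff.mp hb1
  refine ⟨s, a, b, c, ?_, fun p hp => by simpa using hindep p hp⟩
  rw [hw, hb]

/-- From a decomposition back to a pattern. -/
lemma decomp_pat {x : V} {s : Bool} {a b c : List (Ltr V)}
    (hb : ∀ p ∈ b, ¬ Dep Γ x p) :
    Pat x (pf Γ x (a ++ (x, s) :: (b ++ (x, !s) :: c))) := by
  have h1 : pf Γ x (a ++ (x, s) :: (b ++ (x, !s) :: c)) =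
      pf Γ x a ++ (x, s) :: (x, !s) :: pf Γ x c := by
    rw [pf_append, pf_cons_dep Γ (dep_self Γ x s), pf_append,
      pf_eq_nil_of_indep Γ hb, pf_cons_dep Γ (dep_self Γ x (!s))]
    simp
  rw [h1]
  have := getElem?_mid (pf Γ x a) (pf Γ x c) (x, s) (x, !s)
  exact ⟨s, (pf Γ x a).length, this.1, this.2⟩

lemma block_commute {x : V} {b : List (Ltr V)} (hb : ∀ p ∈ b, ¬ Dep Γ x p) (s : Bool) :
    Commute (evalWord Γ b) (raagLetter Γ (x, s)) := by
  induction b with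
  | nil => simp [Commute.one_left]
  | cons p t ih =>
    have hp := hb p (by simp)
    have h1 : Commute (raagLetter Γ p) (raagLetter Γ (x, s)) := by
      refine letter_commute Γ ?_ ?_
      · exact fun hc => hp (Or.inl hc)
      · exact fun hc => hp (Or.inr hc)
    rw [evalWord_cons]
    exact Commute.mul_left h1 (ih (fun q hq => hb q (by simp [hq])))

lemma eval_pair_removal {x : V} {s : Bool} {a b c : List (Ltr V)}
    (hb : ∀ p ∈ b, ¬ Dep Γ x p) :
    evalWord Γ (a ++ (x, s) :: (b ++ (x, !s) :: c)) = evalWord Γ (a ++ (b ++ c)) := by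
  have hcomm := (block_commute Γ hb s).symm
  simp only [evalWord_append, evalWord_cons]
  rw [raagLetter_neg, ← mul_assoc (raagLetter Γ (x, s)), hcomm, mul_assoc,
    mul_inv_cancel_left]

lemma shorten {w : List (Ltr V)} (h : HasPairP Γ w) :
    ∃ w', evalWord Γ w' = evalWord Γ w ∧ w'.length + 2 = w.length := by
  obtain ⟨x, hx⟩ := h
  obtain ⟨s, a, b, c, rfl, hb⟩ := pat_decomp Γ hx
  refine ⟨a ++ (b ++ c), (eval_pair_removal Γ hb).symm, by simp; omega⟩

lemma normalize (w : List (Ltr V)) :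
    ∃ w', NoPairP Γ w' ∧ evalWord Γ w' = evalWord Γ w ∧ w'.length ≤ w.length := by
  suffices H : ∀ (n : ℕ) (w : List (Ltr V)), w.length = n →
      ∃ w', NoPairP Γ w' ∧ evalWord Γ w' = evalWord Γ w ∧ w'.length ≤ w.length by
    exact H w.length w rfl
  intro n
  induction n using Nat.strong_induction_on with
  | _ n ih =>
    intro w hn
    by_cases h : HasPairP Γ w
    · obtain ⟨w1, he, hl⟩ := shorten Γ h
      obtain ⟨w', h1, h2, h3⟩ := ih w1.length (by omega) w1 rfl
      exact ⟨w', h1, h2.trans he, by omega⟩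
    · exact ⟨w, h, rfl, le_refl _⟩

lemma noPair_of_reduced {w : List (Ltr V)} (h : w.length = wlen Γ (evalWord Γ w)) :
    NoPairP Γ w := by
  intro hp
  obtain ⟨w', he, hl⟩ := shorten Γ hp
  have := wlen_le Γ he
  omega

end Stmt6Aux

namespace Stmt6Aux

open List

attribute [local instance] Classical.propDecidable

variable {V : Type} (Γ : SimpleGraph V)

def invL (l : Ltr V) : Ltr V := (l.1, !l.2)

@[simp] lemma invL_invL (l : Ltr V) : invL (invL l) = l := by
  cases l; simp [invL]

@[simp] lemma invL_fst (l : Ltr V) : (invL l).1 = l.1 := rfl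

noncomputable def delF (x : V) (w : List (Ltr V)) : List (Ltr V) :=
  w.takeWhile (fun p => decide (p.1 ≠ x)) ++ (w.dropWhile (fun p => decide (p.1 ≠ x))).tail

lemma delF_nil (x : V) : delF x [] = [] := rfl

lemma delF_cons_eq {x : V} {p : Ltr V} (h : p.1 = x) (w : List (Ltr V)) :
    delF x (p :: w) = w := by
  simp [delF, takeWhile_cons, dropWhile_cons, h]

lemma delF_cons_ne {x : V} {p : Ltr V} (h : p.1 ≠ x) (w : List (Ltr V)) :
    delF x (p :: w) = p :: delF x w := by
  simp [delF, takeWhile_cons, dropWhile_cons, h]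

lemma delF_of_decomp {x : V} {σ : Bool} :
    ∀ {a : List (Ltr V)} (b : List (Ltr V)), (∀ p ∈ a, p.1 ≠ x) →
      delF x (a ++ (x, σ) :: b) = a ++ b := by
  intro a
  induction a with
  | nil => intro b _; exact delF_cons_eq rfl b
  | cons p t ih =>
    intro b ha
    rw [cons_append, delF_cons_ne (ha p (by simp)), ih b (fun q hq => ha q (by simp [hq])),
      cons_append]

lemma delF_spec {x : V} {σ : Bool} {w : List (Ltr V)} (h : HeadP Γ (x, σ) w) :
    ∃ a b, w = a ++ (x, σ) :: b ∧ (∀ p ∈ a, ¬ Dep Γ x p) ∧ delF x w = a ++ b := by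
  obtain ⟨a, b, rfl, ha⟩ := headP_decomp Γ h
  exact ⟨a, b, rfl, ha, delF_of_decomp b (fun p hp => fun hc => ha p hp (Or.inl hc))⟩

noncomputable def act (l : Ltr V) (w : List (Ltr V)) : List (Ltr V) :=
  if HeadP Γ (invL l) w then delF l.1 w else l :: w

lemma act_eq_del {l : Ltr V} {w : List (Ltr V)} (h : HeadP Γ (invL l) w) :
    act Γ l w = delF l.1 w := if_pos h

lemma act_eq_cons {l : Ltr V} {w : List (Ltr V)} (h : ¬ HeadP Γ (invL l) w) :
    act Γ l w = l :: w := if_neg h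

lemma delF_comm {x y : V} (hxy : x ≠ y) :
    ∀ w : List (Ltr V), delF x (delF y w) = delF y (delF x w) := by
  intro w
  induction w with
  | nil => rfl
  | cons p t ih =>
    by_cases hx : p.1 = x
    · have hy : p.1 ≠ y := by rw [hx]; exact hxy
      rw [delF_cons_eq hx, delF_cons_ne hy, delF_cons_eq hx]
    · by_cases hy : p.1 = y
      · rw [delF_cons_eq hy, delF_cons_ne hx, delF_cons_eq hy]
      · rw [delF_cons_ne hy, delF_cons_ne hx, delF_cons_ne hx, delF_cons_ne hy, ih]

lemma delF_swapStep {x : V} {w w' : List (Ltr V)} (h : SwapStep Γ w w') :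
    delF x w = delF x w' ∨ SwapStep Γ (delF x w) (delF x w') := by
  obtain ⟨c, d, l, m, hne, hadj, rfl, rfl⟩ := h
  induction c with
  | nil =>
    by_cases hl : l.1 = x
    · left
      have hm : m.1 ≠ x := by rw [← hl]; exact fun hc => hne hc.symm
      simp only [nil_append]
      rw [delF_cons_eq hl, delF_cons_ne hm, delF_cons_eq hl]
    · by_cases hm : m.1 = x
      · left
        simp only [nil_append]
        rw [delF_cons_ne hl, delF_cons_eq hm, delF_cons_eq hm]
      · right
        simp only [nil_append]
        rw [delF_cons_ne hl, delF_cons_ne hm, delF_cons_ne hm, delF_cons_ne hl]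
        exact ⟨[], delF x d, l, m, hne, hadj, rfl, rfl⟩
  | cons p c' ih =>
    by_cases hp : p.1 = x
    · right
      simp only [cons_append]
      rw [delF_cons_eq hp, delF_cons_eq hp]
      exact ⟨c', d, l, m, hne, hadj, rfl, rfl⟩
    · simp only [cons_append]
      rw [delF_cons_ne hp, delF_cons_ne hp]
      rcases ih with he | hs
      · left; rw [he]
      · right; exact hs.cons Γ p

lemma act_swapStep (l : Ltr V) {w w' : List (Ltr V)} (h : SwapStep Γ w w') :
    SEq Γ (act Γ l w) (act Γ l w') := by
  have hiff := HeadP_SEq Γ (SEq.of_step Γ h) (invL l)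
  by_cases hc : HeadP Γ (invL l) w
  · rw [act_eq_del Γ hc, act_eq_del Γ (hiff.mp hc)]
    rcases delF_swapStep Γ (x := l.1) h with he | hs
    · rw [he]; exact SEq.refl' Γ _
    · exact SEq.of_step Γ hs
  · rw [act_eq_cons Γ hc, act_eq_cons Γ (fun hx => hc (hiff.mpr hx))]
    exact SEq.cons Γ l (SEq.of_step Γ h)

lemma act_SEq (l : Ltr V) {w w' : List (Ltr V)} (h : SEq Γ w w') :
    SEq Γ (act Γ l w) (act Γ l w') := by
  induction h with
  | rel u v hs => exact act_swapStep Γ l hs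
  | refl => exact SEq.refl' Γ _
  | symm _ _ _ ih => exact ih.symm' Γ
  | trans _ _ _ _ _ ih1 ih2 => exact ih1.trans' Γ ih2

/-- acting with a letter on an independent vertex does not change projections. -/
lemma pf_act {x : V} {m : Ltr V} (hne : m.1 ≠ x) (hadj : ¬ Γ.Adj m.1 x)
    (w : List (Ltr V)) : pf Γ x (act Γ m w) = pf Γ x w := by
  have hindep : ¬ Dep Γ x m := fun hd => by rcases hd with h | h; exacts [hne h, hadj h]
  by_cases hc : HeadP Γ (invL m) w
  · rw [act_eq_del Γ hc]
    obtain ⟨a, b, rfl, _, hdel⟩ := delF_spec Γ (σ := (invL m).2) (by exact hc)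
    rw [hdel, pf_append, pf_append, pf_cons_indep]
    exact fun hd => by rcases hd with h | h; exacts [hne h, hadj h]
  · rw [act_eq_cons Γ hc, pf_cons_indep Γ hindep]

-- pattern helpers
lemma Pat_append_left {v : V} (P : List (Ltr V)) {Q : List (Ltr V)} (h : Pat v Q) :
    Pat v (P ++ Q) := by
  obtain ⟨s, i, h1, h2⟩ := h
  refine ⟨s, P.length + i, ?_, ?_⟩
  · rw [getElem?_append_right (by omega)]
    have : P.length + i - P.length = i := by omega
    rw [this]; exact h1
  · rw [getElem?_append_right (by omega)]
    have : P.length + i + 1 - P.length = i + 1 := by omega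
    rw [this]; exact h2

lemma Pat_cons {v : V} (p : Ltr V) {Q : List (Ltr V)} (h : Pat v Q) : Pat v (p :: Q) := by
  have := Pat_append_left (v := v) [p] h
  simpa using this

lemma Pat_cons_elim {v : V} {l : Ltr V} {t : List (Ltr V)} (h : Pat v (l :: t)) :
    (∃ s, l = (v, s) ∧ t[0]? = some (v, !s)) ∨ Pat v t := by
  obtain ⟨s, i, h1, h2⟩ := h
  cases i with
  | zero =>
    left
    refine ⟨s, by simpa using h1, by simpa using h2⟩
  | succ j =>
    right
    exact ⟨s, j, by simpa using h1, by simpa using h2⟩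

lemma Pat_append_elim {v : V} {P Q : List (Ltr V)} (hP : ∀ p ∈ P, p.1 ≠ v)
    (h : Pat v (P ++ Q)) : Pat v Q := by
  obtain ⟨s, i, h1, h2⟩ := h
  have hge : P.length ≤ i := by
    by_contra hlt
    push_neg at hlt
    rw [getElem?_append_left hlt] at h1
    have : (v, s) ∈ P := by
      have := List.getElem?_eq_some_iff.mp h1
      obtain ⟨hlen, hg⟩ := this
      exact hg ▸ List.getElem_mem hlen
    exact hP _ this rfl
  refine ⟨s, i - P.length, ?_, ?_⟩
  · rw [getElem?_append_right hge] at h1; exact h1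
  · rw [getElem?_append_right (by omega)] at h2
    have : i + 1 - P.length = i - P.length + 1 := by omega
    rw [this] at h2; exact h2

lemma head?_eq_zero {t : List (Ltr V)} : t.head? = t[0]? := by
  cases t <;> simp

/-- `act` preserves the absence of cancelling pairs. -/
lemma noPair_act {l : Ltr V} {w : List (Ltr V)} (h : NoPairP Γ w) :
    NoPairP Γ (act Γ l w) := by
  obtain ⟨x, ε⟩ := l
  by_cases hc : HeadP Γ (invL (x, ε)) w
  · -- delete case
    rw [act_eq_del Γ hc]
    obtain ⟨a, b, rfl, ha, hdel⟩ := delF_spec Γ (σ := !ε) (by exact hc)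
    rw [hdel]
    rintro ⟨v, hv⟩
    rw [pf_append] at hv
    by_cases hvx : v = x
    · subst hvx
      rw [pf_eq_nil_of_indep Γ ha, nil_append] at hv
      apply h
      refine ⟨v, ?_⟩
      rw [pf_append, pf_eq_nil_of_indep Γ ha, nil_append,
        pf_cons_dep Γ (dep_self Γ v (!ε))]
      exact Pat_cons _ hv
    · by_cases hdep : Dep Γ v (x, !ε)
      · have hadj : Γ.Adj x v := by
          rcases hdep with h' | h'
          · exact absurd h'.symm hvx
          · exact h'
        have hPa : ∀ p ∈ pf Γ v a, p.1 ≠ v := by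
          intro p hp hpv
          have hmem : p ∈ a := mem_of_mem_filter hp
          have := ha p hmem
          exact this (Or.inr (by rw [hpv]; exact Γ.adj_symm hadj))
        have h2 : Pat v (pf Γ v b) := Pat_append_elim hPa hv
        apply h
        refine ⟨v, ?_⟩
        rw [pf_append, pf_cons_dep Γ hdep]
        exact Pat_append_left _ (Pat_cons _ h2)
      · apply h
        refine ⟨v, ?_⟩
        rw [pf_append, pf_cons_indep Γ hdep]
        exact hv
  · -- prepend case
    rw [act_eq_cons Γ hc]
    rintro ⟨v, hv⟩
    by_cases hd : Dep Γ v (x, ε)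
    · rw [pf_cons_dep Γ hd] at hv
      rcases Pat_cons_elim hv with ⟨s, hls, hhead⟩ | hp
      · have hvx : v = x := by injection hls with h1 _; exact h1.symm ▸ rfl
        have hsε : s = ε := by injection hls with _ h2; exact h2.symm ▸ rfl
        apply hc
        unfold HeadP
        subst hvx hsε
        rw [head?_eq_zero]
        exact hhead
      · exact h ⟨v, hp⟩
    · rw [pf_cons_indep Γ hd] at hv
      exact h ⟨v, hv⟩

/-- the two branches of `act l ∘ act l⁻¹` recover the original word. -/
lemma act_act_inv {l : Ltr V} {w : List (Ltr V)} (h : NoPairP Γ w) :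
    SEq Γ (act Γ l (act Γ (invL l) w)) w := by
  obtain ⟨x, ε⟩ := l
  by_cases h1 : HeadP Γ (x, ε) w
  · have h1' : HeadP Γ (invL (invL (x, ε))) w := by rwa [invL_invL]
    rw [act_eq_del Γ h1']
    obtain ⟨a, b, rfl, ha, hdel⟩ := delF_spec Γ (σ := ε) h1
    rw [show (invL (x, ε)).1 = x from rfl, hdel]
    have hnh : ¬ HeadP Γ (invL (x, ε)) (a ++ b) := by
      intro hh
      replace hh : (pf Γ x (a ++ b)).head? = some (x, !ε) := hh
      rw [pf_append, pf_eq_nil_of_indep Γ ha, nil_append] at hh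
      apply h
      refine ⟨x, ?_⟩
      rw [pf_append, pf_eq_nil_of_indep Γ ha, nil_append,
        pf_cons_dep Γ (dep_self Γ x ε)]
      rw [head?_eq_zero] at hh
      exact ⟨ε, 0, by simp, by simpa using hh⟩
    rw [act_eq_cons Γ hnh]
    exact SEq.front Γ rfl a b ha
  · have h1' : ¬ HeadP Γ (invL (invL (x, ε))) w := by rwa [invL_invL]
    rw [act_eq_cons Γ h1']
    have hh : HeadP Γ (invL (x, ε)) (invL (x, ε) :: w) := by
      show (pf Γ x ((x, !ε) :: w)).head? = some (x, !ε)
      rw [pf_cons_dep Γ (dep_self Γ x (!ε))]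
      rfl
    rw [act_eq_del Γ hh]
    show SEq Γ (delF x ((x, !ε) :: w)) w
    rw [delF_cons_eq (p := (x, !ε)) rfl]
    exact SEq.refl' Γ w

/-- actions of commuting letters commute. -/
lemma act_comm {l m : Ltr V} (hne : l.1 ≠ m.1) (hadj : ¬ Γ.Adj l.1 m.1)
    (w : List (Ltr V)) : SEq Γ (act Γ l (act Γ m w)) (act Γ m (act Γ l w)) := by
  have hpfx : pf Γ l.1 (act Γ m w) = pf Γ l.1 w :=
    pf_act Γ (Ne.symm hne) (fun hA => hadj (Γ.adj_symm hA)) w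
  have hpfy : pf Γ m.1 (act Γ l w) = pf Γ m.1 w :=
    pf_act Γ hne hadj w
  have hHl : HeadP Γ (invL l) (act Γ m w) ↔ HeadP Γ (invL l) w := by
    unfold HeadP; rw [invL_fst, hpfx]
  have hHm : HeadP Γ (invL m) (act Γ l w) ↔ HeadP Γ (invL m) w := by
    unfold HeadP; rw [invL_fst, hpfy]
  by_cases hl : HeadP Γ (invL l) w <;> by_cases hm : HeadP Γ (invL m) w
  · -- both delete
    rw [act_eq_del Γ hm, act_eq_del Γ hl,
      act_eq_del Γ (by rw [act_eq_del Γ hm] at hHl; exact hHl.mpr hl),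
      act_eq_del Γ (by rw [act_eq_del Γ hl] at hHm; exact hHm.mpr hm)]
    rw [delF_comm hne w]
    exact SEq.refl' Γ _
  · -- l deletes, m prepends
    rw [act_eq_cons Γ hm, act_eq_del Γ hl]
    rw [act_eq_del Γ (by rw [act_eq_cons Γ hm] at hHl; exact hHl.mpr hl),
      act_eq_cons Γ (by rw [act_eq_del Γ hl] at hHm; exact fun hx => hm (hHm.mp hx))]
    rw [delF_cons_ne (Ne.symm hne)]
    exact SEq.refl' Γ _
  · -- m deletes, l prepends
    rw [act_eq_del Γ hm, act_eq_cons Γ hl]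
    rw [act_eq_cons Γ (by rw [act_eq_del Γ hm] at hHl; exact fun hx => hl (hHl.mp hx)),
      act_eq_del Γ (by rw [act_eq_cons Γ hl] at hHm; exact hHm.mpr hm)]
    rw [delF_cons_ne hne]
    exact SEq.refl' Γ _
  · -- both prepend
    rw [act_eq_cons Γ hm, act_eq_cons Γ hl]
    rw [act_eq_cons Γ (by rw [act_eq_cons Γ hm] at hHl; exact fun hx => hl (hHl.mp hx)),
      act_eq_cons Γ (by rw [act_eq_cons Γ hl] at hHm; exact fun hx => hm (hHm.mp hx))]
    exact SEq.of_step Γ ⟨[], w, l, m, hne, hadj, rfl, rfl⟩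

end Stmt6Aux

namespace Stmt6Aux

open List

attribute [local instance] Classical.propDecidable

variable {V : Type} (Γ : SimpleGraph V)

lemma noPair_nil : NoPairP Γ ([] : List (Ltr V)) := by
  rintro ⟨v, s, i, h1, _⟩
  simp [pf] at h1

abbrev Rd (Γ : SimpleGraph V) := {w : List (Ltr V) // NoPairP Γ w}

instance rSetoid : Setoid (Rd Γ) :=
  ⟨fun u v => SEq Γ u.1 v.1,
    ⟨fun _ => SEq.refl' Γ _, fun h => h.symm' Γ, fun h1 h2 => h1.trans' Γ h2⟩⟩

abbrev QW (Γ : SimpleGraph V) := Quotient (rSetoid Γ)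

noncomputable def actQ (l : Ltr V) : QW Γ → QW Γ :=
  Quotient.map (fun w => ⟨act Γ l w.1, noPair_act Γ w.2⟩) (fun _ _ hab => act_SEq Γ l hab)

lemma actQ_mk (l : Ltr V) (w : Rd Γ) :
    actQ Γ l (Quotient.mk (rSetoid Γ) w) =
      Quotient.mk (rSetoid Γ) ⟨act Γ l w.1, noPair_act Γ w.2⟩ := rfl

noncomputable def ePerm (l : Ltr V) : Equiv.Perm (QW Γ) where
  toFun := actQ Γ l
  invFun := actQ Γ (invL l)
  left_inv := by
    intro q
    induction q using Quotient.ind with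
    | _ w =>
      rw [actQ_mk, actQ_mk]
      have h := act_act_inv Γ (l := invL l) w.2
      rw [invL_invL] at h
      exact Quotient.sound h
  right_inv := by
    intro q
    induction q using Quotient.ind with
    | _ w =>
      rw [actQ_mk, actQ_mk]
      exact Quotient.sound (act_act_inv Γ w.2)

lemma ePerm_comm {l m : Ltr V} (hne : l.1 ≠ m.1) (hadj : ¬ Γ.Adj l.1 m.1) :
    ePerm Γ l * ePerm Γ m = ePerm Γ m * ePerm Γ l := by
  apply Equiv.ext
  intro q
  induction q using Quotient.ind with
  | _ w =>
    show actQ Γ l (actQ Γ m (Quotient.mk (rSetoid Γ) w)) =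
      actQ Γ m (actQ Γ l (Quotient.mk (rSetoid Γ) w))
    rw [actQ_mk, actQ_mk, actQ_mk, actQ_mk]
    exact Quotient.sound (act_comm Γ hne hadj w.1)

lemma hrels : ∀ r ∈ raagRels Γ, FreeGroup.lift (fun v => ePerm Γ (v, true)) r = 1 := by
  rintro r ⟨v, w, hne, hadj, rfl⟩
  simp only [map_mul, map_inv, FreeGroup.lift_apply_of]
  have hc : ePerm Γ (v, true) * ePerm Γ (w, true) = ePerm Γ (w, true) * ePerm Γ (v, true) :=
    ePerm_comm Γ (by exact hne) (by exact hadj)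
  rw [hc]
  group

noncomputable def toPermHom : RAAG Γ →* Equiv.Perm (QW Γ) :=
  PresentedGroup.toGroup (hrels Γ)

lemma toPermHom_gen (v : V) : toPermHom Γ (raagGen Γ v) = ePerm Γ (v, true) :=
  PresentedGroup.toGroup.of (hrels Γ)

lemma toPermHom_letter (l : Ltr V) (q : QW Γ) :
    toPermHom Γ (raagLetter Γ l) q = actQ Γ l q := by
  obtain ⟨v, b⟩ := l
  cases b
  · have h1 : raagLetter Γ (v, false) = (raagGen Γ v)⁻¹ := by simp [raagLetter]
    rw [h1, map_inv, toPermHom_gen]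
    rfl
  · have h1 : raagLetter Γ (v, true) = raagGen Γ v := by simp [raagLetter]
    rw [h1, toPermHom_gen]
    rfl

noncomputable def q0 : QW Γ := Quotient.mk (rSetoid Γ) ⟨[], noPair_nil Γ⟩

lemma NoPairP_tail {l : Ltr V} {t : List (Ltr V)} (h : NoPairP Γ (l :: t)) :
    NoPairP Γ t := by
  rintro ⟨v, hv⟩
  apply h
  refine ⟨v, ?_⟩
  by_cases hd : Dep Γ v l
  · rw [pf_cons_dep Γ hd]; exact Pat_cons _ hv
  · rw [pf_cons_indep Γ hd]; exact hv

lemma act_cons_of_noPair {l : Ltr V} {t : List (Ltr V)} (h : NoPairP Γ (l :: t)) :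
    act Γ l t = l :: t := by
  obtain ⟨x, ε⟩ := l
  apply act_eq_cons
  intro hh
  replace hh : (pf Γ x t).head? = some (x, !ε) := hh
  apply h
  refine ⟨x, ?_⟩
  rw [pf_cons_dep Γ (dep_self Γ x ε)]
  rw [head?_eq_zero] at hh
  exact ⟨ε, 0, by simp, by simpa using hh⟩

lemma eval_to_q0 : ∀ (w : List (Ltr V)) (h : NoPairP Γ w),
    toPermHom Γ (evalWord Γ w) (q0 Γ) = Quotient.mk (rSetoid Γ) ⟨w, h⟩ := by
  intro w
  induction w with
  | nil => intro h; rw [evalWord_nil, map_one]; rfl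
  | cons l t ih =>
    intro h
    have ht := NoPairP_tail Γ h
    rw [evalWord_cons, map_mul, Equiv.Perm.mul_apply, ih ht, toPermHom_letter, actQ_mk]
    exact congrArg _ (Subtype.ext (act_cons_of_noPair Γ h))

/-- Uniqueness: two reduced (no-pair) words representing the same element
are shuffle equivalent. -/
lemma SEq_of_eval_eq {w w' : List (Ltr V)} (hw : NoPairP Γ w) (hw' : NoPairP Γ w')
    (he : evalWord Γ w = evalWord Γ w') : SEq Γ w w' := by
  have h1 := eval_to_q0 Γ w hw
  have h2 := eval_to_q0 Γ w' hw'
  rw [he] at h1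
  exact Quotient.exact (h1.symm.trans h2)

/-- A no-pair word is geodesic. -/
lemma noPair_length {w : List (Ltr V)} (h : NoPairP Γ w) :
    w.length = wlen Γ (evalWord Γ w) := by
  obtain ⟨u, hu, hul⟩ := exists_min_word Γ (evalWord Γ w)
  obtain ⟨u', h1, h2, h3⟩ := normalize Γ u
  have hse := SEq_of_eval_eq Γ h h1 (by rw [h2, hu])
  have hlen := length_SEq Γ hse
  have h4 := wlen_le Γ (rfl : evalWord Γ w = _)
  omega

end Stmt6Aux

namespace Stmt6Aux

open List

attribute [local instance] Classical.propDecidable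

variable {V : Type} (Γ : SimpleGraph V)

lemma wpow_zero {α : Type*} (w : List α) : wpow w 0 = [] := rfl

lemma wpow_succ {α : Type*} (w : List α) (n : ℕ) : wpow w (n + 1) = w ++ wpow w n := by
  simp [wpow, List.replicate_succ]

lemma evalWord_wpow (w : List (Ltr V)) (n : ℕ) :
    evalWord Γ (wpow w n) = (evalWord Γ w) ^ n := by
  induction n with
  | zero => simp [wpow_zero]
  | succ k ih => rw [wpow_succ, evalWord_append, ih, pow_succ]; group

lemma length_wpow {α : Type*} (w : List α) (n : ℕ) :
    (wpow w n).length = n * w.length := by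
  induction n with
  | zero => simp [wpow_zero]
  | succ k ih => rw [wpow_succ]; simp [ih]; ring

lemma pf_wpow (x : V) (w : List (Ltr V)) (n : ℕ) :
    pf Γ x (wpow w n) = wpow (pf Γ x w) n := by
  induction n with
  | zero => simp [wpow_zero]
  | succ k ih => rw [wpow_succ, wpow_succ, pf_append, ih]

lemma wpow_getElem {α : Type*} {w : List α} {j : ℕ} (hj : j < w.length) :
    ∀ {k n : ℕ}, k < n → (wpow w n)[k * w.length + j]? = w[j]? := by
  intro k
  induction k with
  | zero =>
    intro n hn
    cases n with
    | zero => omega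
    | succ n' =>
      rw [wpow_succ, zero_mul, zero_add]
      exact getElem?_append_left hj
  | succ i ih =>
    intro n hn
    cases n with
    | zero => omega
    | succ n' =>
      rw [wpow_succ, getElem?_append_right (by nlinarith [Nat.succ_mul i w.length])]
      have h1 : (i + 1) * w.length + j - w.length = i * w.length + j := by
        rw [Nat.succ_mul]; omega
      rw [h1]
      exact ih (by omega)

lemma wpow_nil {α : Type*} (n : ℕ) : wpow ([] : List α) n = [] := by
  induction n with
  | zero => rfl
  | succ k ih => rw [wpow_succ, nil_append]; exact ih

lemma Pat_wpow {v : V} {t : List (Ltr V)} {n : ℕ} (h : Pat v (wpow t n)) :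
    Pat v t ∨ ∃ s, t.getLast? = some (v, s) ∧ t.head? = some (v, !s) := by
  obtain ⟨s, i, h1, h2⟩ := h
  have hM : 0 < t.length := by
    rcases Nat.eq_zero_or_pos t.length with h0 | h0
    · exfalso
      have ht : t = [] := List.length_eq_zero_iff.mp h0
      subst ht
      rw [wpow_nil] at h1
      simp at h1
    · exact h0
  have hi2 : i + 1 < (wpow t n).length := (List.getElem?_eq_some_iff.mp h2).1
  rw [length_wpow] at hi2
  obtain ⟨k, r, hkr, hr⟩ : ∃ k r, i = k * t.length + r ∧ r < t.length :=
    ⟨i / t.length, i % t.length, by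
      have h5 := Nat.div_add_mod i t.length
      rw [Nat.mul_comm] at h5
      omega, Nat.mod_lt _ hM⟩
  have hk : k < n := by
    by_contra hc
    push_neg at hc
    have := Nat.mul_le_mul_right t.length hc
    omega
  by_cases hcase : r + 1 < t.length
  · left
    refine ⟨s, r, ?_, ?_⟩
    · rw [hkr] at h1
      rwa [wpow_getElem hr hk] at h1
    · have : i + 1 = k * t.length + (r + 1) := by omega
      rw [this] at h2
      rwa [wpow_getElem hcase hk] at h2
  · have hrM : r + 1 = t.length := by omega
    right
    refine ⟨s, ?_, ?_⟩
    · have hgl : t.getLast? = t[r]? := by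
        rw [List.getLast?_eq_getElem?]
        congr 1
        omega
      rw [hkr] at h1
      rw [wpow_getElem hr hk] at h1
      rw [hgl]
      exact h1
    · have hk1 : k + 1 < n := by
        by_contra hc
        push_neg at hc
        have := Nat.mul_le_mul_right t.length hc
        rw [Nat.succ_mul] at this
        omega
      have hidx : i + 1 = (k + 1) * t.length + 0 := by
        rw [Nat.succ_mul]; omega
      rw [hidx] at h2
      rw [wpow_getElem hM hk1] at h2
      rw [head?_eq_zero]
      exact h2

lemma hard_dir {g : RAAG Γ} (h : CyclicallyReduced Γ g) (n : ℕ) :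
    wlen Γ (g ^ n) = n * wlen Γ g := by
  obtain ⟨w, hw, hwl⟩ := exists_min_word Γ g
  have hwev : evalWord Γ (wpow w n) = g ^ n := by rw [evalWord_wpow, hw]
  by_cases hnp : NoPairP Γ (wpow w n)
  · have h1 := noPair_length Γ hnp
    rw [hwev, length_wpow, hwl] at h1
    exact h1.symm
  · exfalso
    have hp : HasPairP Γ (wpow w n) := by
      unfold NoPairP at hnp
      exact not_not.mp hnp
    obtain ⟨x, hx⟩ := hp
    rw [pf_wpow] at hx
    rcases Pat_wpow hx with hpat | ⟨s, hlast, hhead⟩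
    · have hhp : HasPairP Γ w := ⟨x, hpat⟩
      have hnp2 := noPair_of_reduced Γ (w := w) (by rw [hw]; exact hwl)
      exact hnp2 hhp
    · have hLast : LastP Γ (x, s) w := hlast
      have hHead : HeadP Γ (x, !s) w := hhead
      obtain ⟨a, b, hw1, ha⟩ := headP_decomp Γ hHead
      obtain ⟨c, d, hw2, hd⟩ := lastP_decomp Γ hLast
      have hbc1 : Commute (evalWord Γ a) (raagLetter Γ (x, !s)) := block_commute Γ ha (!s)
      have hbc2 : Commute (evalWord Γ d) (raagLetter Γ (x, s)) := block_commute Γ hd s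
      have hev2 : evalWord Γ ((x, !s) :: (a ++ b)) = g := by
        rw [evalWord_cons, evalWord_append, ← mul_assoc, ← hbc1, mul_assoc,
          ← evalWord_cons, ← evalWord_append, ← hw1, hw]
      have hev1 : evalWord Γ (c ++ (d ++ [(x, s)])) = g := by
        rw [evalWord_append, evalWord_append, evalWord_singleton, ← mul_assoc,
          mul_assoc (evalWord Γ c), hbc2, ← mul_assoc, mul_assoc,
          ← evalWord_cons, ← evalWord_append, ← hw2, hw]
      have hlen2 : ((x, !s) :: (a ++ b)).length = wlen Γ g := by
        have : w.length = a.length + 1 + b.length := by rw [hw1]; simp; omega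
        simp only [length_cons, length_append]
        omega
      have hlen1 : (c ++ (d ++ [(x, s)])).length = wlen Γ g := by
        have : w.length = c.length + 1 + d.length := by rw [hw2]; simp; omega
        simp only [length_append, length_singleton]
        omega
      have hnp2 : NoPairP Γ ((x, !s) :: (a ++ b)) :=
        noPair_of_reduced Γ (by rw [hev2]; exact hlen2)
      have hnp1 : NoPairP Γ (c ++ (d ++ [(x, s)])) :=
        noPair_of_reduced Γ (by rw [hev1]; exact hlen1)
      have hse : SEq Γ ((x, !s) :: (a ++ b)) (c ++ (d ++ [(x, s)])) :=
        SEq_of_eval_eq Γ hnp2 hnp1 (hev2.trans hev1.symm)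
      have hlastu1 : LastP Γ (x, s) (c ++ (d ++ [(x, s)])) := by
        have heq : c ++ (d ++ [(x, s)]) = (c ++ d) ++ (x, s) :: [] := by simp
        rw [heq]
        exact lastP_intro Γ (dep_self Γ x s) (by intro p hp; simp at hp)
      have hlastu2 : LastP Γ (x, s) ((x, !s) :: (a ++ b)) :=
        (LastP_SEq Γ hse (x, s)).mpr hlastu1
      obtain ⟨e, f, hu2, hf⟩ := lastP_decomp Γ hlastu2
      cases e with
      | nil =>
        simp only [nil_append] at hu2
        have : (x, !s) = (x, s) := by injection hu2
        have : (!s) = s := by injection this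
        simp at this
      | cons e₀ e' =>
        have he₀ : e₀ = (x, !s) := by
          have := hu2
          rw [cons_append] at this
          injection this with h1 _
          exact h1.symm
        have hab : a ++ b = e' ++ (x, s) :: f := by
          rw [cons_append] at hu2
          injection hu2
        -- g = X⁻¹ * m * X
        have hbcf : Commute (evalWord Γ f) (raagLetter Γ (x, s)) := block_commute Γ hf s
        have hgm : g = (raagLetter Γ (x, s))⁻¹ *
            (evalWord Γ (e' ++ f)) * raagLetter Γ (x, s) := by
          rw [← hev2, evalWord_cons, hab, evalWord_append, evalWord_cons,
            raagLetter_neg, evalWord_append]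
          rw [← hbcf]
          group
        have hcyc := h (raagLetter Γ (x, s))⁻¹
        have hm : (raagLetter Γ (x, s))⁻¹⁻¹ * g * (raagLetter Γ (x, s))⁻¹ =
            evalWord Γ (e' ++ f) := by
          rw [hgm]; group
        rw [hm] at hcyc
        have hmlen : wlen Γ (evalWord Γ (e' ++ f)) ≤ e'.length + f.length := by
          have := wlen_le Γ (rfl : evalWord Γ (e' ++ f) = _)
          simpa using this
        have hL2 : e'.length + f.length + 2 = wlen Γ g := by
          have h5 : ((x, !s) :: (a ++ b)).length =
              ((x, !s) :: (e' ++ (x, s) :: f)).length := by rw [hab]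
          simp only [length_cons, length_append] at h5 hlen2
          omega
        omega

end Stmt6Aux

theorem stmt6 {V : Type} (Γ : SimpleGraph V) (g : RAAG Γ) :
    CyclicallyReduced Γ g ↔ ∀ n : ℕ, 2 ≤ n → wlen Γ (g ^ n) = n * wlen Γ g := by
  constructor
  · intro h n _
    exact Stmt6Aux.hard_dir Γ h n
  · exact Stmt6Aux.easy_dir Γ g
end
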